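/- arXiv:1403.0473 — 7 statements merged into one kernel-verified Lean document; each statement's English description precedes it below -/
import Mathlib

section
/- Let p > 1 and 0 < u < p be real numbers. Then the convergent infinite product ∏_{1 ≤ i < j} (1 − u²/p^{i+j+1}) / (1 − u²/p^{i+j}), taken over all pairs of positive integers i < j, equals ∏_{i ≥ 3, i odd} (1 − u²/p^i)^{-1}. -/
open scoped BigOperators

open Filter Real Topology

private lemma stmt4_aux_lt (p u : ℝ) (hp : 1 < p) {n : ℕ} (hn : 3 ≤ n) :
    u ^ 2 / p ^ n ≤ u ^ 2 / p ^ 3 := by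
  have hp0 : 0 < p := lt_trans one_pos hp
  have h3 : (0:ℝ) < p ^ 3 := by positivity
  have hle : p ^ 3 ≤ p ^ n := pow_le_pow_right₀ (le_of_lt hp) hn
  exact div_le_div_of_nonneg_left (by positivity) h3 hle

private lemma stmt4_aux_c (p u : ℝ) (hp : 1 < p) (hu : 0 < u) (hup : u < p) :
    0 < 1 - u ^ 2 / p ^ 3 := by
  have hp0 : 0 < p := lt_trans one_pos hp
  have h1 : u ^ 2 < p ^ 2 := by nlinarith
  have h2 : p ^ 2 < p ^ 3 := by nlinarith
  have h3 : (0:ℝ) < p ^ 3 := by positivity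
  have : u ^ 2 / p ^ 3 < 1 := (div_lt_one h3).2 (lt_trans h1 h2)
  linarith

private lemma stmt4_aux_pos (p u : ℝ) (hp : 1 < p) (hu : 0 < u) (hup : u < p)
    {n : ℕ} (hn : 3 ≤ n) : 0 < 1 - u ^ 2 / p ^ n := by
  have := stmt4_aux_lt p u hp hn
  have := stmt4_aux_c p u hp hu hup
  linarith

/-- For real `p > 1` and `0 < u < p`, the convergent infinite product
`∏_{1 ≤ i < j} (1 - u²/p^{i+j+1})/(1 - u²/p^{i+j})` over all pairs of positive
integers `i < j` equals `∏_{i ≥ 3, i odd} (1 - u²/p^i)^{-1}`. -/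
theorem stmt4 (p u : ℝ) (hp : 1 < p) (hu : 0 < u) (hup : u < p) :
    HasProd
      (fun q : {q : ℕ × ℕ // 1 ≤ q.1 ∧ q.1 < q.2} =>
        (1 - u ^ 2 / p ^ (q.1.1 + q.1.2 + 1)) / (1 - u ^ 2 / p ^ (q.1.1 + q.1.2)))
      (∏' k : ℕ, (1 - u ^ 2 / p ^ (2 * k + 3))⁻¹) := by
  have hp0 : 0 < p := lt_trans one_pos hp
  set c : ℝ := 1 - u ^ 2 / p ^ 3 with hc_def
  have hc : 0 < c := stmt4_aux_c p u hp hu hup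
  set F : {q : ℕ × ℕ // 1 ≤ q.1 ∧ q.1 < q.2} → ℝ := fun q =>
    (1 - u ^ 2 / p ^ (q.1.1 + q.1.2 + 1)) / (1 - u ^ 2 / p ^ (q.1.1 + q.1.2)) with hF_def
  have hidx : ∀ q : {q : ℕ × ℕ // 1 ≤ q.1 ∧ q.1 < q.2}, 3 ≤ q.1.1 + q.1.2 := by
    rintro ⟨⟨i, j⟩, h1, h2⟩; simp only at *; omega
  have hden : ∀ q : {q : ℕ × ℕ // 1 ≤ q.1 ∧ q.1 < q.2},
      0 < 1 - u ^ 2 / p ^ (q.1.1 + q.1.2) :=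
    fun q => stmt4_aux_pos p u hp hu hup (hidx q)
  have hnum : ∀ q : {q : ℕ × ℕ // 1 ≤ q.1 ∧ q.1 < q.2},
      0 < 1 - u ^ 2 / p ^ (q.1.1 + q.1.2 + 1) :=
    fun q => stmt4_aux_pos p u hp hu hup (le_trans (hidx q) (Nat.le_succ _))
  have hFpos : ∀ q, 0 < F q := fun q => div_pos (hnum q) (hden q)
  have hF1 : ∀ q, 1 ≤ F q := by
    intro q
    rw [hF_def, le_div_iff₀ (hden q), one_mul]
    have : u ^ 2 / p ^ (q.1.1 + q.1.2 + 1) ≤ u ^ 2 / p ^ (q.1.1 + q.1.2) := by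
      apply div_le_div_of_nonneg_left (by positivity) (by positivity)
      exact pow_le_pow_right₀ (le_of_lt hp) (Nat.le_succ _)
    linarith
  -- summable bound
  have hr : (0:ℝ) < p⁻¹ := by positivity
  have hr1 : p⁻¹ < 1 := inv_lt_one_of_one_lt₀ hp
  have hgeo : Summable (fun n : ℕ => p⁻¹ ^ n) :=
    summable_geometric_of_lt_one (le_of_lt hr) hr1
  have hgeo' : Summable (fun n : ℕ => (u ^ 2 / c) * p⁻¹ ^ n) := hgeo.mul_left _
  have hB : Summable (fun q : ℕ × ℕ => ((u ^ 2 / c) * p⁻¹ ^ q.1) * p⁻¹ ^ q.2) :=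
    hgeo'.mul_of_nonneg hgeo (fun n => by positivity) (fun n => by positivity)
  have hBs : Summable (fun q : {q : ℕ × ℕ // 1 ≤ q.1 ∧ q.1 < q.2} =>
      ((u ^ 2 / c) * p⁻¹ ^ q.1.1) * p⁻¹ ^ q.1.2) :=
    hB.comp_injective Subtype.coe_injective
  have hlog : Summable (fun q => Real.log (F q)) := by
    apply Summable.of_nonneg_of_le (fun q => Real.log_nonneg (hF1 q)) _ hBs
    intro q
    have h1 : Real.log (F q) ≤ F q - 1 := Real.log_le_sub_one_of_pos (hFpos q)
    have h2 : F q - 1 ≤ ((u ^ 2 / c) * p⁻¹ ^ q.1.1) * p⁻¹ ^ q.1.2 := by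
      have hd := hden q
      have hn := hnum q
      have hyc : c ≤ 1 - u ^ 2 / p ^ (q.1.1 + q.1.2) := by
        have := stmt4_aux_lt p u hp (hidx q); linarith
      have heq : F q - 1 = (u ^ 2 / p ^ (q.1.1 + q.1.2) - u ^ 2 / p ^ (q.1.1 + q.1.2 + 1)) /
          (1 - u ^ 2 / p ^ (q.1.1 + q.1.2)) := by
        rw [hF_def]
        rw [div_sub_one (ne_of_gt (hden q))]
        ring_nf
      have hxy : u ^ 2 / p ^ (q.1.1 + q.1.2) - u ^ 2 / p ^ (q.1.1 + q.1.2 + 1)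
          ≤ u ^ 2 / p ^ (q.1.1 + q.1.2) := by
        have : 0 ≤ u ^ 2 / p ^ (q.1.1 + q.1.2 + 1) := by positivity
        linarith
      have key : F q - 1 ≤ (u ^ 2 / p ^ (q.1.1 + q.1.2)) / c := by
        rw [heq]
        calc (u ^ 2 / p ^ (q.1.1 + q.1.2) - u ^ 2 / p ^ (q.1.1 + q.1.2 + 1)) /
            (1 - u ^ 2 / p ^ (q.1.1 + q.1.2))
            ≤ (u ^ 2 / p ^ (q.1.1 + q.1.2)) / (1 - u ^ 2 / p ^ (q.1.1 + q.1.2)) :=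
              (div_le_div_iff_of_pos_right (hden q)).2 hxy
          _ ≤ (u ^ 2 / p ^ (q.1.1 + q.1.2)) / c :=
              div_le_div_of_nonneg_left (by positivity) hc hyc
      have : (u ^ 2 / p ^ (q.1.1 + q.1.2)) / c = ((u ^ 2 / c) * p⁻¹ ^ q.1.1) * p⁻¹ ^ q.1.2 := by
        rw [pow_add]
        field_simp
        rw [one_div, inv_pow, inv_pow]
        field_simp
      exact key.trans_eq this
    linarith
  -- multipliability of F
  have hmulF : Multipliable F := by
    refine ⟨Real.exp (∑' q, Real.log (F q)), ?_⟩
    have h := hlog.hasSum.rexp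
    have heq : (rexp ∘ fun q => Real.log (F q)) = F :=
      funext fun q => Real.exp_log (hFpos q)
    rwa [heq] at h
  -- the reindexing equivalence
  let e : ℕ × ℕ ≃ {q : ℕ × ℕ // 1 ≤ q.1 ∧ q.1 < q.2} :=
  { toFun := fun a => ⟨(a.1 + 1, a.1 + a.2 + 2), ⟨by omega, by omega⟩⟩
    invFun := fun q => (q.1.1 - 1, q.1.2 - q.1.1 - 1)
    left_inv := fun a => by
      obtain ⟨x, y⟩ := a
      simp only []
      exact Prod.ext (by omega) (by omega)
    right_inv := fun q => by
      obtain ⟨⟨i, j⟩, h1, h2⟩ := q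
      apply Subtype.ext
      simp only []
      exact Prod.ext (by omega) (by omega) }
  have hFe : ∀ (a b : ℕ), F (e (a, b)) =
      (1 - u ^ 2 / p ^ (2 * a + 3 + (b + 1))) / (1 - u ^ 2 / p ^ (2 * a + 3 + b)) := by
    intro a b
    show (1 - u ^ 2 / p ^ ((a + 1) + (a + b + 2) + 1)) / (1 - u ^ 2 / p ^ ((a + 1) + (a + b + 2)))
      = _
    have e1 : (a + 1) + (a + b + 2) + 1 = 2 * a + 3 + (b + 1) := by ring
    have e2 : (a + 1) + (a + b + 2) = 2 * a + 3 + b := by ring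
    rw [e1, e2]
  -- fiberwise products telescope
  have hfiber : ∀ a : ℕ, HasProd (fun b => F (e (a, b))) ((1 - u ^ 2 / p ^ (2 * a + 3))⁻¹) := by
    intro a
    set g : ℕ → ℝ := fun m => 1 - u ^ 2 / p ^ (2 * a + 3 + m) with hg_def
    have hgpos : ∀ m, 0 < g m := fun m => stmt4_aux_pos p u hp hu hup (by omega)
    have hprod : ∀ n, ∏ b ∈ Finset.range n, F (e (a, b)) = g n / g 0 := by
      intro n
      induction n with
      | zero => simp [div_self (ne_of_gt (hgpos 0))]
      | succ n ih =>
        rw [Finset.prod_range_succ, ih, hFe]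
        show g n / g 0 * (g (n + 1) / g n) = g (n + 1) / g 0
        have h0 := ne_of_gt (hgpos 0)
        have hn := ne_of_gt (hgpos n)
        field_simp
    have hlogf : Summable (fun b : ℕ => Real.log (F (e (a, b)))) := by
      have h1 : Summable (fun ab : ℕ × ℕ => Real.log (F (e ab))) :=
        (e.summable_iff (f := fun q => Real.log (F q))).2 hlog
      exact h1.comp_injective (f := fun ab : ℕ × ℕ => Real.log (F (e ab)))
        (i := fun b : ℕ => (a, b)) (fun b c h => by simpa using h)
    have hmf : Multipliable (fun b => F (e (a, b))) := by
      refine ⟨Real.exp (∑' b, Real.log (F (e (a, b)))), ?_⟩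
      have h := hlogf.hasSum.rexp
      have heq : (rexp ∘ fun b => Real.log (F (e (a, b)))) = fun b => F (e (a, b)) :=
        funext fun b => Real.exp_log (hFpos _)
      rwa [heq] at h
    rw [hmf.hasProd_iff_tendsto_nat]
    have hth : Tendsto g atTop (𝓝 1) := by
      have hgeq : g = fun n => 1 - (u ^ 2 / p ^ (2 * a + 3)) * p⁻¹ ^ n := by
        funext n
        rw [hg_def]
        simp only []
        rw [pow_add]
        field_simp
        rw [one_div, inv_pow]
        field_simp
      rw [hgeq]
      have h2 := (tendsto_pow_atTop_nhds_zero_of_lt_one (le_of_lt hr) hr1).const_mul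
        (u ^ 2 / p ^ (2 * a + 3))
      simpa using tendsto_const_nhds.sub h2
    have hdiv := hth.div_const (g 0)
    have hlim : (1 : ℝ) / g 0 = (1 - u ^ 2 / p ^ (2 * a + 3))⁻¹ := by
      rw [hg_def]
      norm_num
    rw [hlim] at hdiv
    exact Tendsto.congr (fun n => (hprod n).symm) hdiv
  -- assemble
  have hgF : HasProd (fun ab : ℕ × ℕ => F (e ab)) (∏' q, F q) :=
    (e.hasProd_iff (f := F)).2 hmulF.hasProd
  have hgfinal : HasProd (fun a : ℕ => (1 - u ^ 2 / p ^ (2 * a + 3))⁻¹) (∏' q, F q) :=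
    hgF.prod_fiberwise fun a => hfiber a
  have htp : (∏' k : ℕ, (1 - u ^ 2 / p ^ (2 * k + 3))⁻¹) = ∏' q, F q := hgfinal.tprod_eq
  rw [htp]
  exact hmulF.hasProd
end

section
/- Let p > 1 be a real number and r a positive integer. Then ∏_{i=1}^{r} (1 − p^{-(i+1)})/(1 − p^{-i}) · ∏_{1 ≤ i < j ≤ r} (1 − p^{-(i+j+1)})/(1 − p^{-(i+j)}) = ∏_{k=1}^{r} (1 + p^{-k}). -/
open scoped BigOperators

lemma tele (g : ℕ → ℝ) (hg : ∀ k, 1 ≤ k → g k ≠ 0) :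
    ∀ n : ℕ, ∏ i ∈ Finset.Icc 1 n, g (i+1) / g i = g (n+1) / g 1 := by
  intro n
  induction n with
  | zero => simp [div_self (hg 1 le_rfl)]
  | succ n ih =>
      rw [Finset.prod_Icc_succ_top (Nat.succ_le_succ (Nat.zero_le n)), ih]
      have h1 := hg 1 le_rfl
      have h2 := hg (n+1) (Nat.succ_le_succ (Nat.zero_le n))
      field_simp

lemma pos_aux (p : ℝ) (hp : 1 < p) (k : ℕ) (hk : 1 ≤ k) : 0 < 1 - 1 / p ^ k := by
  have h1 : (1:ℝ) < p ^ k := one_lt_pow₀ hp (by omega)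
  have h0 : (0:ℝ) < p ^ k := by positivity
  rw [sub_pos, div_lt_one h0]
  exact h1

lemma frac (q : ℝ) (hq : q ≠ 0) (h : 1 - 1/q ≠ 0) :
    (1 - 1/(q*q))/(1 - 1/q) = 1 + 1/q := by
  rw [div_eq_iff h]
  field_simp
  ring

lemma cancel (a b c : ℝ) (ha : a ≠ 0) : a/b * (c/a) = c/b := by
  rw [div_mul_div_comm, mul_comm b a, mul_div_mul_left c b ha]

lemma setdec (r : ℕ) :
    ((Finset.Icc 1 (r+1) ×ˢ Finset.Icc 1 (r+1)).filter (fun q : ℕ × ℕ => q.1 < q.2))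
    = ((Finset.Icc 1 r ×ˢ Finset.Icc 1 r).filter (fun q => q.1 < q.2))
      ∪ (Finset.Icc 1 r).image (fun i => (i, r+1)) := by
  ext ⟨a, b⟩
  simp only [Finset.mem_filter, Finset.mem_product, Finset.mem_Icc, Finset.mem_union,
    Finset.mem_image, Prod.mk.injEq]
  constructor
  · rintro ⟨⟨⟨h1,h2⟩,h3,h4⟩,h5⟩
    by_cases hb : b = r+1
    · right; exact ⟨a, by omega, rfl, hb.symm⟩
    · left; omega
  · rintro (⟨⟨⟨h1,h2⟩,h3,h4⟩,h5⟩ | ⟨i, hi, rfl, rfl⟩) <;> omega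

/-- For real `p > 1` and a positive integer `r`:
`∏_{i=1}^{r} (1 - p^{-(i+1)})/(1 - p^{-i}) · ∏_{1 ≤ i < j ≤ r} (1 - p^{-(i+j+1)})/(1 - p^{-(i+j)})
  = ∏_{k=1}^{r} (1 + p^{-k})`. -/
theorem stmt5 (p : ℝ) (hp : 1 < p) (r : ℕ) (hr : 1 ≤ r) :
    (∏ i ∈ Finset.Icc 1 r, (1 - 1 / p ^ (i + 1)) / (1 - 1 / p ^ i)) *
      ∏ q ∈ (Finset.Icc 1 r ×ˢ Finset.Icc 1 r).filter (fun q => q.1 < q.2),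
        (1 - 1 / p ^ (q.1 + q.2 + 1)) / (1 - 1 / p ^ (q.1 + q.2))
    = ∏ k ∈ Finset.Icc 1 r, (1 + 1 / p ^ k) := by
  have hne : ∀ k, 1 ≤ k → (1 - 1 / p ^ k) ≠ 0 := fun k hk => ne_of_gt (pos_aux p hp k hk)
  have hp0 : p ≠ 0 := by linarith
  induction r with
  | zero => omega
  | succ n ih =>
      rcases Nat.eq_or_lt_of_le hr with h1 | h1
      · -- n = 0
        have hn : n = 0 := by omega
        subst hn
        have he : ((Finset.Icc 1 1 ×ˢ Finset.Icc 1 1).filter (fun q : ℕ×ℕ => q.1 < q.2)) = ∅ := by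
          decide
        rw [he]
        simp only [Finset.Icc_self, Finset.prod_singleton, Finset.prod_empty, mul_one,
          Nat.zero_add, pow_one]
        have := frac p hp0 (by simpa using hne 1 le_rfl)
        rw [show (1+1 : ℕ) = 2 by rfl, sq p] at *
        exact this
      · have hn : 1 ≤ n := by omega
        have ihn := ih hn
        rw [setdec n, Finset.prod_union, Finset.prod_image,
          Finset.prod_Icc_succ_top (Nat.succ_le_succ (Nat.zero_le n)),
          Finset.prod_Icc_succ_top (Nat.succ_le_succ (Nat.zero_le n))]
        · have htel : ∏ i ∈ Finset.Icc 1 n,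
              (1 - 1 / p ^ (i + (n+1) + 1)) / (1 - 1 / p ^ (i + (n+1))) =
              (1 - 1 / p ^ (2*n + 2)) / (1 - 1 / p ^ (n + 2)) := by
            have h := tele (fun i => 1 - 1 / p ^ (i + n + 1))
              (fun k hk => hne (k + n + 1) (by omega)) n
            calc ∏ i ∈ Finset.Icc 1 n,
                (1 - 1 / p ^ (i + (n+1) + 1)) / (1 - 1 / p ^ (i + (n+1)))
                = ∏ i ∈ Finset.Icc 1 n,
                  (1 - 1 / p ^ (i + 1 + n + 1)) / (1 - 1 / p ^ (i + n + 1)) := by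
                  apply Finset.prod_congr rfl; intro i _
                  rw [show ∀ i : ℕ, i + (n+1) + 1 = i + 1 + n + 1 from fun i => by omega,
                    show i + (n+1) = i + n + 1 from by omega]
              _ = (1 - 1 / p ^ (n + 1 + n + 1)) / (1 - 1 / p ^ (1 + n + 1)) := h
              _ = (1 - 1 / p ^ (2*n + 2)) / (1 - 1 / p ^ (n + 2)) := by
                  rw [show n + 1 + n + 1 = 2*n + 2 from by omega,
                    show 1 + n + 1 = n + 2 from by omega]
          rw [htel, ← ihn]
          have key : (1 - 1 / p ^ (n + 1 + 1)) / (1 - 1 / p ^ (n + 1)) *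
              ((1 - 1 / p ^ (2*n + 2)) / (1 - 1 / p ^ (n + 2))) = 1 + 1 / p ^ (n+1) := by
            have h2n : p ^ (2*n + 2) = p^(n+1) * p^(n+1) := by rw [← pow_add]; ring_nf
            have hfr := frac (p^(n+1)) (pow_ne_zero _ hp0) (hne (n+1) (by omega))
            calc (1 - 1 / p ^ (n + 1 + 1)) / (1 - 1 / p ^ (n + 1)) *
                ((1 - 1 / p ^ (2*n + 2)) / (1 - 1 / p ^ (n + 2)))
                = (1 - 1 / (p^(n+1) * p^(n+1))) / (1 - 1 / p ^ (n + 1)) := by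
                  rw [show n + 1 + 1 = n + 2 from rfl, h2n]
                  exact cancel _ _ _ (hne (n+2) (by omega))
              _ = 1 + 1 / p ^ (n+1) := hfr
          calc ((∏ i ∈ Finset.Icc 1 n, (1 - 1 / p ^ (i + 1)) / (1 - 1 / p ^ i)) *
                ((1 - 1 / p ^ (n + 1 + 1)) / (1 - 1 / p ^ (n + 1)))) *
              ((∏ q ∈ (Finset.Icc 1 n ×ˢ Finset.Icc 1 n).filter (fun q => q.1 < q.2),
                  (1 - 1 / p ^ (q.1 + q.2 + 1)) / (1 - 1 / p ^ (q.1 + q.2))) *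
                ((1 - 1 / p ^ (2*n + 2)) / (1 - 1 / p ^ (n + 2))))
              = ((∏ i ∈ Finset.Icc 1 n, (1 - 1 / p ^ (i + 1)) / (1 - 1 / p ^ i)) *
                ∏ q ∈ (Finset.Icc 1 n ×ˢ Finset.Icc 1 n).filter (fun q => q.1 < q.2),
                  (1 - 1 / p ^ (q.1 + q.2 + 1)) / (1 - 1 / p ^ (q.1 + q.2))) *
                ((1 - 1 / p ^ (n + 1 + 1)) / (1 - 1 / p ^ (n + 1)) *
                  ((1 - 1 / p ^ (2*n + 2)) / (1 - 1 / p ^ (n + 2)))) := by ring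
            _ = _ := by rw [key]
        · intro a _ b _ h
          simpa using h
        · rw [Finset.disjoint_left]
          rintro ⟨a, b⟩ hab hmem
          simp only [Finset.mem_filter, Finset.mem_product, Finset.mem_Icc] at hab
          simp only [Finset.mem_image, Prod.mk.injEq] at hmem
          obtain ⟨i, hi, rfl, rfl⟩ := hmem
          omega
end

section
/- Let q be a real number with 0 < q < 1 and r a positive integer. Then ∏_{i=1}^{r}(1 − q^i) · ∑_{s=0}^{r} q^{s(s+1)/2} / ( ∏_{i=1}^{s}(1 − q^i) · ∏_{i=1}^{r−s}(1 − q^i) ) = ∏_{k=1}^{r} (1 + q^k). -/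
open scoped BigOperators
open Finset

namespace Stmt9Aux

noncomputable def P (q : ℝ) (n : ℕ) : ℝ := ∏ i ∈ Finset.Icc 1 n, (1 - q ^ i)

lemma P_zero (q : ℝ) : P q 0 = 1 := by simp [P]

lemma P_succ (q : ℝ) (n : ℕ) : P q (n+1) = P q n * (1 - q ^ (n+1)) := by
  rw [P, P, Finset.prod_Icc_succ_top (by omega)]

lemma P_pos {q : ℝ} (hq0 : 0 < q) (hq1 : q < 1) (n : ℕ) : 0 < P q n := by
  refine Finset.prod_pos fun i hi => ?_
  have hi1 : 1 ≤ i := (Finset.mem_Icc.mp hi).1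
  have : q ^ i < 1 := pow_lt_one₀ hq0.le hq1 (by omega)
  linarith

lemma one_sub_pow_ne {q : ℝ} (hq0 : 0 < q) (hq1 : q < 1) (n : ℕ) :
    (1 - q ^ (n+1)) ≠ 0 := by
  have : q ^ (n+1) < 1 := pow_lt_one₀ hq0.le hq1 (by omega)
  linarith

lemma pascal {q : ℝ} (hq0 : 0 < q) (hq1 : q < 1) (t d : ℕ) :
    P q (t+d+2) / (P q (t+1) * P q (d+1))
      = P q (t+d+1) / (P q (t+1) * P q d)
        + q ^ (d+1) * (P q (t+d+1) / (P q t * P q (d+1))) := by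
  have ht := (P_pos hq0 hq1 t).ne'
  have hd := (P_pos hq0 hq1 d).ne'
  have htd := (P_pos hq0 hq1 (t+d+1)).ne'
  have hqt := one_sub_pow_ne hq0 hq1 t
  have hqd := one_sub_pow_ne hq0 hq1 d
  rw [show t+d+2 = (t+d+1)+1 from rfl, P_succ, P_succ q t, P_succ q d]
  field_simp
  ring

lemma Tsucc (t : ℕ) : (t+1) * (t+2) / 2 = t * (t+1) / 2 + (t+1) := by
  have h : (t+1) * (t+2) = t * (t+1) + 2 * (t+1) := by ring
  rw [h, Nat.add_mul_div_left _ _ (by norm_num : 0 < 2)]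

lemma key {q : ℝ} (hq0 : 0 < q) (hq1 : q < 1) (r : ℕ) :
    P q (r+1) * ∑ s ∈ range (r+2), q ^ (s*(s+1)/2) / (P q s * P q (r+1-s))
      = (1 + q ^ (r+1)) *
        (P q r * ∑ s ∈ range (r+1), q ^ (s*(s+1)/2) / (P q s * P q (r-s))) := by
  set g : ℕ → ℕ → ℝ := fun n s => q ^ (s*(s+1)/2) * (P q n / (P q s * P q (n-s))) with hg
  have hsum : ∀ n, P q n * ∑ s ∈ range (n+1), q ^ (s*(s+1)/2) / (P q s * P q (n-s))
      = ∑ s ∈ range (n+1), g n s := by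
    intro n
    rw [Finset.mul_sum]
    exact Finset.sum_congr rfl fun s _ => by simp only [hg]; ring
  rw [show r+2 = (r+1)+1 from rfl, hsum (r+1), hsum r]
  rw [Finset.sum_range_succ, Finset.sum_range_succ']
  have hstep : ∀ i ∈ range r, g (r+1) (i+1) = g r (i+1) + q ^ (r+1) * g r i := by
    intro i hi
    have hir : i < r := Finset.mem_range.mp hi
    have hd : r - i - 1 + 1 = r - i := by omega
    have hPas := pascal hq0 hq1 i (r - i - 1)
    rw [hd] at hPas
    rw [show i + (r-i-1) + 2 = r + 1 by omega, show i + (r-i-1) + 1 = r by omega] at hPas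
    simp only [hg]
    rw [show (r+1) - (i+1) = r - i by omega, hPas]
    rw [show r - (i+1) = r - i - 1 by omega]
    have hT : (i+1)*(i+2)/2 = i*(i+1)/2 + (i+1) := Tsucc i
    rw [show i + 1 + 1 = i + 2 from rfl, hT]
    have hexp : q ^ (i*(i+1)/2 + (i+1)) * q ^ (r - i) = q ^ (r+1) * q ^ (i*(i+1)/2) := by
      rw [← pow_add, ← pow_add]
      congr 1
      omega
    rw [mul_add]
    congr 1
    rw [← mul_assoc, hexp]
    ring
  rw [Finset.sum_congr rfl hstep, Finset.sum_add_distrib]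
  have hg0 : g (r+1) 0 = 1 := by
    simp only [hg]
    simp [P_zero, div_self (P_pos hq0 hq1 (r+1)).ne']
  have hgr0 : g r 0 = 1 := by
    simp only [hg]
    simp [P_zero, div_self (P_pos hq0 hq1 r).ne']
  have hgtop : g (r+1) (r+1) = q ^ (r+1) * g r r := by
    simp only [hg]
    rw [Nat.sub_self, Nat.sub_self, P_zero, mul_one, mul_one,
      div_self (P_pos hq0 hq1 (r+1)).ne', div_self (P_pos hq0 hq1 r).ne',
      mul_one, mul_one, show r + 1 + 1 = r + 2 from rfl, Tsucc r, pow_add]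
    ring
  rw [hg0, hgtop]
  have hshift : (∑ x ∈ range r, g r (x+1)) + g r 0
      = (∑ x ∈ range r, g r x) + g r r := by
    rw [← Finset.sum_range_succ' (fun s => g r s) r, Finset.sum_range_succ]
  rw [hgr0] at hshift
  rw [Finset.sum_congr rfl (fun x _ => rfl : ∀ x ∈ range r, q ^ (r+1) * g r x = q ^ (r+1) * g r x),
    ← Finset.mul_sum]
  rw [Finset.sum_range_succ (fun s => g r s) r]
  nlinarith [hshift]

lemma main {q : ℝ} (hq0 : 0 < q) (hq1 : q < 1) (n : ℕ) :
    P q n * ∑ s ∈ range (n+1), q ^ (s*(s+1)/2) / (P q s * P q (n-s))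
      = ∏ k ∈ Finset.Icc 1 n, (1 + q ^ k) := by
  induction n with
  | zero => simp [P]
  | succ m ih =>
      rw [key hq0 hq1 m, ih, Finset.prod_Icc_succ_top (by omega : 1 ≤ m+1)]
      ring

end Stmt9Aux

/-- For real `0 < q < 1` and a positive integer `r`:
`∏_{i=1}^{r}(1 - q^i) · ∑_{s=0}^{r} q^{s(s+1)/2}/(∏_{i=1}^{s}(1-q^i) ∏_{i=1}^{r-s}(1-q^i))
  = ∏_{k=1}^{r}(1 + q^k)`. -/
theorem stmt9 (q : ℝ) (hq0 : 0 < q) (hq1 : q < 1) (r : ℕ) (hr : 1 ≤ r) :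
    (∏ i ∈ Finset.Icc 1 r, (1 - q ^ i)) *
      ∑ s ∈ Finset.range (r + 1),
        q ^ (s * (s + 1) / 2) /
          ((∏ i ∈ Finset.Icc 1 s, (1 - q ^ i)) *
            ∏ i ∈ Finset.Icc 1 (r - s), (1 - q ^ i))
    = ∏ k ∈ Finset.Icc 1 r, (1 + q ^ k) :=
  Stmt9Aux.main hq0 hq1 r
end

section
/- Let p > 1 be a real number. For natural numbers a ≥ b, define K(a, b) = ∏_{i=1}^{a}(1 − p^{-i}) / ( p^{b(b+1)/2} · ∏_{i=1}^{b}(1 − p^{-i}) · ∏_{j=1}^{⌊(a−b)/2⌋}(1 − p^{-2j}) ). Then for every natural number a, the transition probabilities sum to one: ∑_{b=0}^{a} K(a, b) = 1. -/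
open scoped BigOperators

/-- The Markov-chain transition probability
`K(a,b) = ∏_{i=1}^{a}(1-p^{-i}) / (p^{b(b+1)/2} ∏_{i=1}^{b}(1-p^{-i}) ∏_{j=1}^{⌊(a-b)/2⌋}(1-p^{-2j}))`. -/
noncomputable def Ktrans (p : ℝ) (a b : ℕ) : ℝ :=
  (∏ i ∈ Finset.Icc 1 a, (1 - 1 / p ^ i)) /
    (p ^ (b * (b + 1) / 2) * (∏ i ∈ Finset.Icc 1 b, (1 - 1 / p ^ i)) *
      ∏ j ∈ Finset.Icc 1 ((a - b) / 2), (1 - 1 / p ^ (2 * j)))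

/-- Denominator of `Ktrans`. -/
noncomputable def Dd (p : ℝ) (a b : ℕ) : ℝ :=
  p ^ (b * (b + 1) / 2) * (∏ i ∈ Finset.Icc 1 b, (1 - 1 / p ^ i)) *
      ∏ j ∈ Finset.Icc 1 ((a - b) / 2), (1 - 1 / p ^ (2 * j))

lemma inv_helper {D X : ℝ} (hX : X ≠ 0) : D⁻¹ = X * (D * X)⁻¹ := by
  rw [mul_inv, mul_comm D⁻¹ X⁻¹, ← mul_assoc, mul_inv_cancel₀ hX, one_mul]

section Aux

variable {p : ℝ} (hp : 1 < p)
include hp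

lemma fac_pos {i : ℕ} (hi : i ≠ 0) : 0 < 1 - 1 / p ^ i := by
  have h1 : (1:ℝ) < p ^ i := one_lt_pow₀ hp hi
  have h0 : (0:ℝ) < p ^ i := by linarith
  have : 1 / p ^ i < 1 := by
    rw [div_lt_one h0]; exact h1
  linarith

lemma prod1_pos (n : ℕ) : 0 < ∏ i ∈ Finset.Icc 1 n, (1 - 1 / p ^ i) := by
  apply Finset.prod_pos
  intro i hi
  rw [Finset.mem_Icc] at hi
  exact fac_pos hp (by omega)

lemma prod2_pos (n : ℕ) : 0 < ∏ j ∈ Finset.Icc 1 n, (1 - 1 / p ^ (2 * j)) := by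
  apply Finset.prod_pos
  intro j hj
  rw [Finset.mem_Icc] at hj
  exact fac_pos hp (by omega)

lemma Dd_pos (a b : ℕ) : 0 < Dd p a b := by
  have hp0 : (0:ℝ) < p := by linarith
  exact mul_pos (mul_pos (pow_pos hp0 _) (prod1_pos hp b)) (prod2_pos hp _)

omit hp in
/-- Odd offset: the row can be lowered by one. -/
lemma R1 {a b : ℕ} (hpar : ¬ 2 ∣ (a + 1 - b)) (hb : b ≤ a + 1) :
    Dd p a b = Dd p (a + 1) b := by
  unfold Dd
  have : (a - b) / 2 = (a + 1 - b) / 2 := by omega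
  rw [this]

omit hp in
/-- Even offset, `b ≤ a`: extra factor appears. -/
lemma R2 {a b : ℕ} (hpar : 2 ∣ (a + 1 - b)) (hb : b ≤ a) :
    Dd p (a + 1) b = Dd p a b * (1 - 1 / p ^ (a + 1 - b)) := by
  unfold Dd
  have h1 : (a + 1 - b) / 2 = (a - b) / 2 + 1 := by omega
  have h2 : 2 * ((a - b) / 2 + 1) = a + 1 - b := by omega
  rw [h1, Finset.prod_Icc_succ_top (by omega : 1 ≤ (a - b) / 2 + 1), h2]
  ring

omit hp in
/-- Moving `b` down by one within a row (even offset at `c+1`). -/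
lemma R3 {a c : ℕ} (hpar : 2 ∣ (a - (c + 1))) (hc : c + 1 ≤ a) :
    Dd p a (c + 1) = Dd p a c * (p ^ (c + 1) * (1 - 1 / p ^ (c + 1))) := by
  unfold Dd
  have h1 : (c + 1) * (c + 1 + 1) / 2 = c * (c + 1) / 2 + (c + 1) := by
    have h : (c + 1) * (c + 1 + 1) = c * (c + 1) + 2 * (c + 1) := by ring
    rw [h, Nat.add_mul_div_left _ _ (by norm_num : 0 < 2)]
  have h2 : (a - (c + 1)) / 2 = (a - c) / 2 := by omega
  rw [h1, h2, pow_add, Finset.prod_Icc_succ_top (by omega : 1 ≤ c + 1)]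
  ring

/-- The master per-term identity. -/
lemma master (a b : ℕ) (hb : b ≤ a + 1) :
    (1 - 1 / p ^ (a + 1)) * (Dd p (a + 1) b)⁻¹ =
      (if b ≤ a then (Dd p a b)⁻¹ else 0)
      + (if 2 ∣ (a + 1 - b) ∧ 1 ≤ b then (1 / p ^ (a + 1)) * (Dd p (a + 1) (b - 1))⁻¹ else 0)
      - (if ¬ 2 ∣ (a + 1 - b) then (1 / p ^ (a + 1)) * (Dd p (a + 1) b)⁻¹ else 0) := by
  have hp0 : (0:ℝ) < p := by linarith
  have hpne : p ≠ 0 := ne_of_gt hp0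
  by_cases hpar : 2 ∣ (a + 1 - b)
  · have c3 : ¬ ¬ 2 ∣ (a + 1 - b) := not_not_intro hpar
    rw [if_neg c3, sub_zero]
    rcases Nat.lt_or_ge b (a + 1) with hba | hba
    · -- b ≤ a
      have hba' : b ≤ a := by omega
      rw [if_pos hba']
      rcases Nat.eq_zero_or_pos b with rfl | hb1
      · -- b = 0
        have c2 : ¬ (2 ∣ (a + 1 - 0) ∧ 1 ≤ 0) := by omega
        rw [if_neg c2, add_zero]
        have hX : (1 - 1 / p ^ (a + 1)) ≠ 0 := ne_of_gt (fac_pos hp (by omega))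
        rw [R2 (p := p) hpar hba', Nat.sub_zero, mul_inv,
          mul_comm (Dd p a 0)⁻¹, ← mul_assoc, mul_inv_cancel₀ hX, one_mul]
      · -- 1 ≤ b ≤ a
        obtain ⟨c, rfl⟩ : ∃ c, b = c + 1 := ⟨b - 1, by omega⟩
        have c2 : (2 ∣ (a + 1 - (c + 1)) ∧ 1 ≤ c + 1) := ⟨hpar, by omega⟩
        rw [if_pos c2]
        have hX2 : (1 - 1 / p ^ (a + 1 - (c + 1))) ≠ 0 := ne_of_gt (fac_pos hp (by omega))
        have hX3 : (p ^ (c + 1) * (1 - 1 / p ^ (c + 1))) ≠ 0 :=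
          ne_of_gt (mul_pos (pow_pos hp0 _) (fac_pos hp (by omega)))
        have e2 : (Dd p a (c + 1))⁻¹
            = (1 - 1 / p ^ (a + 1 - (c + 1))) * (Dd p (a + 1) (c + 1))⁻¹ := by
          rw [inv_helper hX2 (D := Dd p a (c + 1)), ← R2 (p := p) hpar hba']
        have e3 : (Dd p (a + 1) (c + 1 - 1))⁻¹
            = (p ^ (c + 1) * (1 - 1 / p ^ (c + 1))) * (Dd p (a + 1) (c + 1))⁻¹ := by
          rw [Nat.add_sub_cancel]
          rw [inv_helper hX3 (D := Dd p (a + 1) c),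
            ← R3 (p := p) (a := a + 1) (c := c) (by omega) (by omega)]
        rw [e2, e3]
        have key : 1 - 1 / p ^ (a + 1)
            = (1 - 1 / p ^ (a + 1 - (c + 1)))
              + (1 / p ^ (a + 1)) * (p ^ (c + 1) * (1 - 1 / p ^ (c + 1))) := by
          have h1 : p ^ (a + 1) = p ^ (a + 1 - (c + 1)) * p ^ (c + 1) := by
            rw [← pow_add]
            congr 1
            omega
          rw [h1]
          field_simp
          ring
        calc (1 - 1 / p ^ (a + 1)) * (Dd p (a + 1) (c + 1))⁻¹
            = ((1 - 1 / p ^ (a + 1 - (c + 1)))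
                + (1 / p ^ (a + 1)) * (p ^ (c + 1) * (1 - 1 / p ^ (c + 1))))
                * (Dd p (a + 1) (c + 1))⁻¹ := by rw [← key]
          _ = _ := by ring
    · -- b = a + 1
      have hba' : b = a + 1 := by omega
      subst hba'
      have c1 : ¬ (a + 1 ≤ a) := by omega
      have c2 : (2 ∣ (a + 1 - (a + 1)) ∧ 1 ≤ a + 1) := ⟨by omega, by omega⟩
      rw [if_neg c1, if_pos c2, zero_add]
      have hX3 : (p ^ (a + 1) * (1 - 1 / p ^ (a + 1))) ≠ 0 :=
        ne_of_gt (mul_pos (pow_pos hp0 _) (fac_pos hp (by omega)))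
      have e3 : (Dd p (a + 1) (a + 1 - 1))⁻¹
          = (p ^ (a + 1) * (1 - 1 / p ^ (a + 1))) * (Dd p (a + 1) (a + 1))⁻¹ := by
        rw [Nat.add_sub_cancel]
        rw [inv_helper hX3 (D := Dd p (a + 1) a),
          ← R3 (p := p) (a := a + 1) (c := a) (by omega) (by omega)]
      rw [e3]
      have hppow : (1 / p ^ (a + 1)) * p ^ (a + 1) = 1 := by
        field_simp
      calc (1 - 1 / p ^ (a + 1)) * (Dd p (a + 1) (a + 1))⁻¹
          = ((1 / p ^ (a + 1)) * p ^ (a + 1))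
              * ((1 - 1 / p ^ (a + 1)) * (Dd p (a + 1) (a + 1))⁻¹) := by
            rw [hppow, one_mul]
        _ = _ := by ring
  · -- odd offset
    have hba : b ≤ a := by omega
    have c2 : ¬ (2 ∣ (a + 1 - b) ∧ 1 ≤ b) := fun h => hpar h.1
    rw [if_pos hba, if_neg c2, if_pos hpar, add_zero]
    rw [R1 (p := p) hpar hb]
    ring

/-- Summed one-step recurrence. -/
lemma sum_step (a : ℕ) :
    (1 - 1 / p ^ (a + 1)) * ∑ b ∈ Finset.range (a + 2), (Dd p (a + 1) b)⁻¹
      = ∑ b ∈ Finset.range (a + 1), (Dd p a b)⁻¹ := by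
  rw [Finset.mul_sum]
  rw [Finset.sum_congr rfl (fun b hb => master hp a b (by
    rw [Finset.mem_range] at hb; omega))]
  rw [Finset.sum_sub_distrib, Finset.sum_add_distrib]
  have h1 : ∑ b ∈ Finset.range (a + 2), (if b ≤ a then (Dd p a b)⁻¹ else 0)
      = ∑ b ∈ Finset.range (a + 1), (Dd p a b)⁻¹ := by
    rw [Finset.sum_range_succ]
    have c1 : ¬ (a + 1 ≤ a) := by omega
    rw [if_neg c1, add_zero]
    apply Finset.sum_congr rfl
    intro b hb
    rw [Finset.mem_range] at hb
    rw [if_pos (by omega : b ≤ a)]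
  have h2 : ∑ b ∈ Finset.range (a + 2),
        (if 2 ∣ (a + 1 - b) ∧ 1 ≤ b then (1 / p ^ (a + 1)) * (Dd p (a + 1) (b - 1))⁻¹ else 0)
      = ∑ b ∈ Finset.range (a + 2),
        (if ¬ 2 ∣ (a + 1 - b) then (1 / p ^ (a + 1)) * (Dd p (a + 1) b)⁻¹ else 0) := by
    rw [Finset.sum_range_succ' (fun b =>
      if 2 ∣ (a + 1 - b) ∧ 1 ≤ b then (1 / p ^ (a + 1)) * (Dd p (a + 1) (b - 1))⁻¹ else 0) (a + 1)]
    rw [Finset.sum_range_succ (fun b =>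
      if ¬ 2 ∣ (a + 1 - b) then (1 / p ^ (a + 1)) * (Dd p (a + 1) b)⁻¹ else 0) (a + 1)]
    have c0 : ¬ (2 ∣ (a + 1 - 0) ∧ 1 ≤ 0) := by omega
    have cl : ¬ ¬ 2 ∣ (a + 1 - (a + 1)) := by omega
    rw [if_neg c0, if_neg cl, add_zero, add_zero]
    apply Finset.sum_congr rfl
    intro i hi
    rw [Finset.mem_range] at hi
    have hiff : (2 ∣ (a + 1 - (i + 1)) ∧ 1 ≤ i + 1) ↔ ¬ 2 ∣ (a + 1 - i) := by omega
    have hsub : i + 1 - 1 = i := by omega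
    simp only [hsub]
    by_cases h : ¬ 2 ∣ (a + 1 - i)
    · rw [if_pos (hiff.mpr h), if_pos h]
    · rw [if_neg (fun hc => h (hiff.mp hc)), if_neg h]
  rw [h1, h2]
  ring

/-- The main identity, by induction. -/
lemma sum_inv (a : ℕ) :
    ∑ b ∈ Finset.range (a + 1), (Dd p a b)⁻¹
      = (∏ i ∈ Finset.Icc 1 a, (1 - 1 / p ^ i))⁻¹ := by
  induction a with
  | zero => simp [Dd]
  | succ a ih =>
    have hstep := sum_step hp a
    have hx : (1 - 1 / p ^ (a + 1)) ≠ 0 := ne_of_gt (fac_pos hp (by omega))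
    have hmain : ∑ b ∈ Finset.range (a + 2), (Dd p (a + 1) b)⁻¹
        = (∏ i ∈ Finset.Icc 1 a, (1 - 1 / p ^ i))⁻¹ / (1 - 1 / p ^ (a + 1)) := by
      rw [← ih, ← hstep]
      exact (mul_div_cancel_left₀ _ hx).symm
    rw [hmain, Finset.prod_Icc_succ_top (by omega : 1 ≤ a + 1), mul_inv, div_eq_mul_inv]

end Aux

/-- For real `p > 1` and every natural number `a`, the transition
probabilities sum to one: `∑_{b=0}^{a} K(a,b) = 1`. -/
theorem stmt10 (p : ℝ) (hp : 1 < p) (a : ℕ) :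
    ∑ b ∈ Finset.range (a + 1), Ktrans p a b = 1 := by
  have hK : ∀ b, Ktrans p a b = (∏ i ∈ Finset.Icc 1 a, (1 - 1 / p ^ i)) * (Dd p a b)⁻¹ := by
    intro b
    rw [Ktrans, Dd, div_eq_mul_inv]
  calc ∑ b ∈ Finset.range (a + 1), Ktrans p a b
      = (∏ i ∈ Finset.Icc 1 a, (1 - 1 / p ^ i))
          * ∑ b ∈ Finset.range (a + 1), (Dd p a b)⁻¹ := by
        rw [Finset.mul_sum]
        exact Finset.sum_congr rfl fun b _ => hK b
    _ = 1 := by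
        rw [sum_inv hp a]
        exact mul_inv_cancel₀ (ne_of_gt (prod1_pos hp a))
end

section
/- Let p > 1 be a real number. For natural numbers a ≥ b, define K(a, b) = ∏_{i=1}^{a}(1 − p^{-i}) / ( p^{b(b+1)/2} · ∏_{i=1}^{b}(1 − p^{-i}) · ∏_{j=1}^{⌊(a−b)/2⌋}(1 − p^{-2j}) ), and define the initial probability P₀(b) = ∏_{i odd}(1 − p^{-i}) / ( p^{b(b+1)/2} · ∏_{i=1}^{b}(1 − p^{-i}) ). Then for every partition λ with conjugate column heights μ_i = λ'_i (so μ_i = 0 for i > λ_1), one has (∏_{i odd}(1 − p^{-i})) · w_p(λ) = P₀(μ_1) · ∏_{i=1}^{λ_1} K(μ_i, μ_{i+1}). In other words, the partition generated by the Markov chain with initial distribution P₀ and transition kernel K (run until the column heights reach 0) is distributed according to the probability measure λ ↦ (∏_{i odd}(1 − p^{-i})) · w_p(λ). -/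
open scoped BigOperators

/-- The list of parts of a partition, sorted in decreasing order:
`λ_1 ≥ λ_2 ≥ ⋯`. -/
def sortedParts {n : ℕ} (lam : n.Partition) : List ℕ :=
  (lam.parts.sort (· ≤ ·)).reverse

/-- The statistic `n(λ) = ∑_{i ≥ 1} (i-1) λ_i` (using 0-based indices this is
`∑_i i * λ_{i+1}`). -/
def nStat {n : ℕ} (lam : n.Partition) : ℕ :=
  ∑ i ∈ Finset.range (sortedParts lam).length, i * (sortedParts lam).getD i 0

/-- The weight `w_p(λ) = 1/(p^{n(λ)+|λ|} ∏_{i ≥ 1} ∏_{j=1}^{⌊m_i(λ)/2⌋} (1 - p^{-2j}))`,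
where `m_i(λ)` is the number of parts of `λ` equal to `i`.  Since `m_i(λ) = 0`
for `i > |λ|`, the outer product may be truncated at `|λ|`. -/
noncomputable def wWeight (p : ℝ) (P : Σ n : ℕ, n.Partition) : ℝ :=
  1 / (p ^ (nStat P.2 + P.1) *
    ∏ i ∈ Finset.Icc 1 P.1,
      ∏ j ∈ Finset.Icc 1 (P.2.parts.count i / 2), (1 - 1 / p ^ (2 * j)))

/-- The conjugate partition: `(conjPart P) i = λ'_i` is the number of parts of `λ`
that are `≥ i`. -/
def conjPart (P : Σ n : ℕ, n.Partition) (i : ℕ) : ℕ :=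
  (P.2.parts.filter (i ≤ ·)).card

/-- The initial probability
`P₀(b) = ∏_{i odd}(1-p^{-i}) / (p^{b(b+1)/2} ∏_{i=1}^{b}(1-p^{-i}))`. -/
noncomputable def Pinit (p : ℝ) (b : ℕ) : ℝ :=
  (∏' k : ℕ, (1 - 1 / p ^ (2 * k + 1))) /
    (p ^ (b * (b + 1) / 2) * ∏ i ∈ Finset.Icc 1 b, (1 - 1 / p ^ i))

noncomputable def Ap (p : ℝ) (b : ℕ) : ℝ := ∏ i ∈ Finset.Icc 1 b, (1 - 1 / p ^ i)

noncomputable def Bp (p : ℝ) (m : ℕ) : ℝ := ∏ j ∈ Finset.Icc 1 m, (1 - 1 / p ^ (2 * j))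

def Tn (b : ℕ) : ℕ := b * (b + 1) / 2

lemma one_sub_pos' {p : ℝ} (hp : 1 < p) {i : ℕ} (hi : 1 ≤ i) : 0 < 1 - 1 / p ^ i := by
  have h1 : (1:ℝ) < p ^ i := one_lt_pow₀ hp (by omega)
  have h2 : 1 / p ^ i < 1 := by rw [div_lt_one (by linarith)]; exact h1
  linarith

lemma Ap_pos {p : ℝ} (hp : 1 < p) (b : ℕ) : 0 < Ap p b :=
  Finset.prod_pos fun i hi => one_sub_pos' hp (Finset.mem_Icc.mp hi).1

lemma Bp_pos {p : ℝ} (hp : 1 < p) (m : ℕ) : 0 < Bp p m :=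
  Finset.prod_pos fun j hj => one_sub_pos' hp
    (by have := (Finset.mem_Icc.mp hj).1; omega)

lemma Ktrans_eq (p : ℝ) (a b : ℕ) :
    Ktrans p a b = Ap p a / (p ^ Tn b * Ap p b * Bp p ((a - b) / 2)) := rfl

lemma tele_s11 (p : ℝ) (hp : 1 < p) (μ : ℕ → ℕ) (L : ℕ) :
    ∏ i ∈ Finset.Icc 1 L, Ktrans p (μ i) (μ (i + 1))
      = Ap p (μ 1) / Ap p (μ (L + 1)) *
        (1 / (p ^ (∑ i ∈ Finset.Icc 1 L, Tn (μ (i + 1))) *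
          ∏ i ∈ Finset.Icc 1 L, Bp p ((μ i - μ (i + 1)) / 2))) := by
  have h0 : (0:ℝ) < p := by linarith
  induction L with
  | zero => simp [(Ap_pos hp (μ 1)).ne']
  | succ L ih =>
    rw [Finset.prod_Icc_succ_top (by omega : 1 ≤ L + 1), ih,
      Finset.prod_Icc_succ_top (by omega : 1 ≤ L + 1),
      Finset.sum_Icc_succ_top (by omega : 1 ≤ L + 1), Ktrans_eq, pow_add]
    have hA1 := (Ap_pos hp (μ (L + 1))).ne'
    have hA2 := (Ap_pos hp (μ (L + 1 + 1))).ne'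
    have hB := (Bp_pos hp ((μ (L + 1) - μ (L + 1 + 1)) / 2)).ne'
    have hBB : (∏ i ∈ Finset.Icc 1 L, Bp p ((μ i - μ (i + 1)) / 2)) ≠ 0 :=
      (Finset.prod_pos fun i _ => Bp_pos hp _).ne'
    have hpS : (p : ℝ) ^ (∑ i ∈ Finset.Icc 1 L, Tn (μ (i + 1))) ≠ 0 :=
      (pow_pos h0 _).ne'
    have hpT : (p : ℝ) ^ Tn (μ (L + 1 + 1)) ≠ 0 := (pow_pos h0 _).ne'
    field_simp

lemma sum_getD (l : List ℕ) :
    ∑ i ∈ Finset.range l.length, l.getD i 0 = l.sum := by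
  induction l with
  | nil => simp
  | cons x t ih =>
    rw [List.length_cons, Finset.sum_range_succ']
    simp only [List.getD_cons_succ, List.getD_cons_zero, List.sum_cons, ih]
    omega

lemma filtIcc (N x : ℕ) (h : x ≤ N) :
    Finset.filter (fun i => i ≤ x) (Finset.Icc 1 N) = Finset.Icc 1 x := by
  ext i
  simp only [Finset.mem_filter, Finset.mem_Icc]
  omega

lemma sumFilt (N : ℕ) (l : List ℕ) (h : ∀ x ∈ l, x ≤ N) :
    ∑ i ∈ Finset.Icc 1 N, (l.filter (i ≤ ·)).length = l.sum := by
  induction l with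
  | nil => simp
  | cons x t ih =>
    have hx : x ≤ N := h x List.mem_cons_self
    have hstep : ∀ i, ((x :: t).filter (i ≤ ·)).length
        = (if i ≤ x then 1 else 0) + (t.filter (i ≤ ·)).length := by
      intro i
      by_cases hix : i ≤ x <;> simp [List.filter_cons, hix] <;> omega
    simp only [hstep]
    rw [Finset.sum_add_distrib, ih (fun y hy => h y (List.mem_cons_of_mem _ hy)),
      ← Finset.sum_filter, filtIcc N x hx, Finset.sum_const, smul_eq_mul, mul_one,
      List.sum_cons]
    rw [Nat.card_Icc]
    omega

lemma Tn_succ (d : ℕ) : Tn (d + 1) = Tn d + (d + 1) := by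
  unfold Tn
  have h : (d + 1) * (d + 1 + 1) = d * (d + 1) + 2 * (d + 1) := by ring
  omega

lemma keyStat (N : ℕ) (l : List ℕ) (hs : l.Pairwise (· ≥ ·)) (hb : ∀ x ∈ l, x ≤ N) :
    (∑ i ∈ Finset.range l.length, i * l.getD i 0) + l.sum
      = ∑ i ∈ Finset.Icc 1 N, Tn ((l.filter (i ≤ ·)).length) := by
  induction l with
  | nil => simp [Tn]
  | cons x t ih =>
    have hx : x ≤ N := hb x List.mem_cons_self
    obtain ⟨hxt, hst⟩ := List.pairwise_cons.mp hs
    have hpt : ∀ i ∈ Finset.Icc 1 N, Tn (((x :: t).filter (i ≤ ·)).length)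
        = Tn ((t.filter (i ≤ ·)).length)
          + (if i ≤ x then (t.filter (i ≤ ·)).length + 1 else 0) := by
      intro i _
      by_cases hix : i ≤ x
      · simp only [List.filter_cons, hix, decide_true, if_true, List.length_cons, if_pos hix]
        exact Tn_succ _
      · simp [List.filter_cons, hix]
    rw [Finset.sum_congr rfl hpt, Finset.sum_add_distrib,
      ← ih hst (fun y hy => hb y (List.mem_cons_of_mem _ hy))]
    have hsum2 : ∑ i ∈ Finset.Icc 1 N,
        (if i ≤ x then (t.filter (i ≤ ·)).length + 1 else 0)
        = t.sum + x := by
      rw [← Finset.sum_filter, filtIcc N x hx, Finset.sum_add_distrib,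
        sumFilt x t hxt, Finset.sum_const, smul_eq_mul, mul_one, Nat.card_Icc]
      omega
    rw [hsum2, List.length_cons, Finset.sum_range_succ']
    simp only [List.getD_cons_succ, List.getD_cons_zero, List.sum_cons]
    have hsplit : ∑ i ∈ Finset.range t.length, (i + 1) * t.getD i 0
        = (∑ i ∈ Finset.range t.length, i * t.getD i 0) + t.sum := by
      rw [← sum_getD t, ← Finset.sum_add_distrib]
      exact Finset.sum_congr rfl fun i _ => by ring
    rw [hsplit]
    omega

lemma shiftSum (f : ℕ → ℕ) (L : ℕ) :
    f 1 + ∑ i ∈ Finset.Icc 1 L, f (i + 1)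
      = (∑ i ∈ Finset.Icc 1 L, f i) + f (L + 1) := by
  induction L with
  | zero => simp
  | succ L ih =>
    rw [Finset.sum_Icc_succ_top (by omega : 1 ≤ L + 1),
      Finset.sum_Icc_succ_top (by omega : 1 ≤ L + 1), ← Nat.add_assoc, ih]

lemma count_split (M : Multiset ℕ) (i : ℕ) :
    Multiset.card (M.filter (i ≤ ·))
      = Multiset.card (M.filter (i + 1 ≤ ·)) + M.count i := by
  induction M using Multiset.induction_on with
  | empty => simp
  | cons a s ih =>
    rw [Multiset.filter_cons, Multiset.filter_cons, Multiset.count_cons]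
    by_cases h2 : i = a
    · subst h2
      have h3 : ¬ (i + 1 ≤ i) := by omega
      simp [h3, ih] <;> omega
    · by_cases h1 : i ≤ a
      · have h3 : i + 1 ≤ a := by omega
        simp [h1, h2, h3, ih] <;> omega
      · have h3 : ¬ (i + 1 ≤ a) := by omega
        simp [h1, h2, h3, ih] <;> omega

lemma sortedParts_coe {n : ℕ} (lam : n.Partition) :
    (↑(sortedParts lam) : Multiset ℕ) = lam.parts := by
  show (↑(Multiset.sort lam.parts (· ≤ ·)).reverse : Multiset ℕ) = _
  rw [Multiset.coe_reverse, Multiset.sort_eq]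

lemma sortedParts_sorted {n : ℕ} (lam : n.Partition) :
    (sortedParts lam).Pairwise (· ≥ ·) := by
  have h := Multiset.pairwise_sort lam.parts (· ≤ ·)
  exact List.pairwise_reverse.mpr (by exact h.imp fun {a b} hab => hab)

lemma conj_eq_list {n : ℕ} (lam : n.Partition) (i : ℕ) :
    (lam.parts.filter (i ≤ ·)).card = ((sortedParts lam).filter (i ≤ ·)).length := by
  rw [← sortedParts_coe lam, Multiset.filter_coe, Multiset.coe_card]

/-- For real `p > 1` and every partition `λ`, with conjugate column
heights `μ_i = λ'_i`,
`(∏_{i odd}(1-p^{-i})) · w_p(λ) = P₀(μ_1) · ∏_{i=1}^{λ_1} K(μ_i, μ_{i+1})`;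
i.e. the Markov chain with initial distribution `P₀` and transition kernel `K` produces
partitions distributed according to the measure `λ ↦ (∏_{i odd}(1-p^{-i})) w_p(λ)`. -/
theorem stmt11 (p : ℝ) (hp : 1 < p) (P : Σ n : ℕ, n.Partition) :
    (∏' k : ℕ, (1 - 1 / p ^ (2 * k + 1))) * wWeight p P
      = Pinit p (conjPart P 1) *
          ∏ i ∈ Finset.Icc 1 P.2.parts.sup, Ktrans p (conjPart P i) (conjPart P (i + 1)) := by
  classical
  set C : ℝ := ∏' k : ℕ, (1 - 1 / p ^ (2 * k + 1)) with hC
  have h0 : (0:ℝ) < p := by linarith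
  set L := P.2.parts.sup with hL
  set μ : ℕ → ℕ := fun i => conjPart P i with hμ
  have hml : ∀ x ∈ P.2.parts, x ≤ L := fun x hx => Multiset.le_sup hx
  have hLn : L ≤ P.1 := by
    rw [← P.2.parts_sum]
    exact Multiset.sup_le.mpr fun x hx =>
      Multiset.single_le_sum (fun y _ => Nat.zero_le y) x hx
  have hμtop : μ (L + 1) = 0 := by
    show (P.2.parts.filter (L + 1 ≤ ·)).card = 0
    rw [Multiset.card_eq_zero, Multiset.filter_eq_nil]
    intro a ha
    have h' := hml a ha
    omega
  -- exponent identity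
  have hlb : ∀ x ∈ sortedParts P.2, x ≤ L := by
    intro x hx
    apply hml
    rw [← sortedParts_coe P.2]
    exact hx
  have hμl : ∀ i, μ i = ((sortedParts P.2).filter (i ≤ ·)).length :=
    fun i => conj_eq_list P.2 i
  have hlsum : (sortedParts P.2).sum = P.1 := by
    have : ((sortedParts P.2 : Multiset ℕ)).sum = (sortedParts P.2).sum := rfl
    rw [← this, sortedParts_coe, P.2.parts_sum]
  have hE : Tn (μ 1) + ∑ i ∈ Finset.Icc 1 L, Tn (μ (i + 1)) = nStat P.2 + P.1 := by
    rw [shiftSum (fun i => Tn (μ i)) L, hμtop]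
    have hTn0 : Tn 0 = 0 := rfl
    rw [hTn0, Nat.add_zero]
    have : ∑ i ∈ Finset.Icc 1 L, Tn (μ i)
        = ∑ i ∈ Finset.Icc 1 L, Tn (((sortedParts P.2).filter (i ≤ ·)).length) :=
      Finset.sum_congr rfl fun i _ => by rw [hμl]
    rw [this, ← keyStat L (sortedParts P.2) (sortedParts_sorted P.2) hlb, hlsum]
    rfl
  -- product identity
  have hcount : ∀ i, μ i - μ (i + 1) = P.2.parts.count i := by
    intro i
    have := count_split P.2.parts i
    show (P.2.parts.filter (i ≤ ·)).card - (P.2.parts.filter (i + 1 ≤ ·)).card = _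
    omega
  have hPd : ∏ i ∈ Finset.Icc 1 P.1, Bp p (P.2.parts.count i / 2)
      = ∏ i ∈ Finset.Icc 1 L, Bp p ((μ i - μ (i + 1)) / 2) := by
    rw [Finset.prod_congr rfl (fun i (_ : i ∈ Finset.Icc 1 L) => by rw [hcount i])]
    refine (Finset.prod_subset (Finset.Icc_subset_Icc_right hLn) ?_).symm
    intro x hx hxn
    have hx1 : 1 ≤ x := (Finset.mem_Icc.mp hx).1
    have hxL : L < x := by
      have := Finset.mem_Icc.mp hx
      by_contra hle
      exact hxn (Finset.mem_Icc.mpr ⟨hx1, by omega⟩)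
    have hc0 : P.2.parts.count x = 0 := by
      rw [Multiset.count_eq_zero]
      intro hmem
      exact absurd (hml x hmem) (by omega)
    rw [hc0]
    simp [Bp]
  -- assemble
  have hw : wWeight p P
      = 1 / (p ^ (nStat P.2 + P.1) * ∏ i ∈ Finset.Icc 1 P.1, Bp p (P.2.parts.count i / 2)) := rfl
  have hPi : Pinit p (conjPart P 1) = C / (p ^ Tn (μ 1) * Ap p (μ 1)) := rfl
  rw [hw, hPi, tele_s11 p hp μ L, hμtop]
  have hA0 : Ap p (0 : ℕ) = 1 := by simp [Ap]
  rw [hA0, ← hPd, ← hE, pow_add]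
  have hA1 := (Ap_pos hp (μ 1)).ne'
  have hPdne : (∏ i ∈ Finset.Icc 1 P.1, Bp p (P.2.parts.count i / 2)) ≠ 0 :=
    (Finset.prod_pos fun i _ => Bp_pos hp _).ne'
  have hp1 : (p : ℝ) ^ Tn (μ 1) ≠ 0 := (pow_pos h0 _).ne'
  have hp2 : (p : ℝ) ^ (∑ i ∈ Finset.Icc 1 L, Tn (μ (i + 1))) ≠ 0 := (pow_pos h0 _).ne'
  field_simp
end

section
/- Let p > 1 be a real number. Then ∑_{a=0}^{∞} ∏_{i=a+1}^{∞}(1 − p^{-i}) / ( p^{a(a+1)/2} · ∏_{i=1}^{∞}(1 − p^{-2i}) ) = 1. -/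
open scoped BigOperators
open Real Filter Finset
open scoped Topology

namespace Stmt13

variable {q : ℝ}

lemma one_sub_pos' (hq0 : 0 ≤ q) (hq1 : q < 1) {e : ℕ} (he : e ≠ 0) : 0 < 1 - q ^ e := by
  have : q ^ e < 1 := pow_lt_one₀ hq0 hq1 he
  linarith

lemma summable_log_one_sub (hq0 : 0 ≤ q) (hq1 : q < 1) :
    Summable fun k : ℕ => Real.log (1 - q ^ (k + 1)) := by
  rw [← summable_neg_iff]
  have hsum : Summable fun k : ℕ => q ^ k / (1 - q) :=
    (summable_geometric_of_lt_one hq0 hq1).div_const _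
  refine Summable.of_nonneg_of_le (fun k => ?_) (fun k => ?_) hsum
  · have h1 := one_sub_pos' (e := k+1) hq0 hq1 (by omega)
    have hx : 0 ≤ q ^ (k+1) := pow_nonneg hq0 _
    have : Real.log (1 - q ^ (k+1)) ≤ 0 := Real.log_nonpos (by linarith) (by linarith)
    linarith
  · have h1 := one_sub_pos' (e := k+1) hq0 hq1 (by omega)
    have hx : 0 ≤ q ^ (k+1) := pow_nonneg hq0 _
    have hle : Real.log ((1 - q ^ (k+1))⁻¹) ≤ (1 - q ^ (k+1))⁻¹ - 1 :=
      Real.log_le_sub_one_of_pos (by positivity)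
    rw [Real.log_inv] at hle
    have he : (1 - q ^ (k+1))⁻¹ - 1 = q ^ (k+1) / (1 - q ^ (k+1)) := by
      field_simp
      ring
    rw [he] at hle
    have h2 : q ^ (k+1) / (1 - q ^ (k+1)) ≤ q ^ k / (1 - q) := by
      have hk1 : q ^ (k+1) ≤ q ^ k := pow_le_pow_of_le_one hq0 hq1.le (by omega)
      have hq' : (0:ℝ) < 1 - q := by linarith
      have hq'' : 1 - q ≤ 1 - q ^ (k+1) := by
        have : q ^ (k+1) ≤ q := pow_le_of_le_one hq0 hq1.le k.succ_ne_zero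
        linarith
      exact div_le_div₀ (pow_nonneg hq0 k) hk1 hq' hq''
    linarith

lemma summable_log_one_add (hq0 : 0 ≤ q) (hq1 : q < 1) :
    Summable fun k : ℕ => Real.log (1 + q ^ (k + 1)) := by
  have hsum : Summable fun k : ℕ => q ^ k :=
    summable_geometric_of_lt_one hq0 hq1
  refine Summable.of_nonneg_of_le (fun k => ?_) (fun k => ?_) hsum
  · exact Real.log_nonneg (by nlinarith [pow_nonneg hq0 (k+1)])
  · have hx : 0 ≤ q ^ (k+1) := pow_nonneg hq0 _
    have hle : Real.log (1 + q ^ (k+1)) ≤ (1 + q ^ (k+1)) - 1 :=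
      Real.log_le_sub_one_of_pos (by positivity)
    have hk1 : q ^ (k+1) ≤ q ^ k := pow_le_pow_of_le_one hq0 hq1.le (by omega)
    linarith

/-- the shifted log-sum -/
noncomputable def S (q : ℝ) (m : ℕ) : ℝ := ∑' k : ℕ, Real.log (1 - q ^ (m + 1 + k))

lemma summable_shift (hq0 : 0 ≤ q) (hq1 : q < 1) (m : ℕ) :
    Summable fun k : ℕ => Real.log (1 - q ^ (m + 1 + k)) := by
  have h := (summable_nat_add_iff m).2 (summable_log_one_sub hq0 hq1)
  refine h.congr fun k => ?_
  rw [show k + m + 1 = m + 1 + k from by omega]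

/-- the tail product -/
noncomputable def P (q : ℝ) (m : ℕ) : ℝ := ∏' k : ℕ, (1 - q ^ (m + 1 + k))

lemma P_eq_exp (hq0 : 0 ≤ q) (hq1 : q < 1) (m : ℕ) : P q m = Real.exp (S q m) := by
  exact (Real.rexp_tsum_eq_tprod (f := fun k => 1 - q ^ (m + 1 + k))
    (fun k => one_sub_pos' hq0 hq1 (by omega))
    (summable_shift hq0 hq1 m)).symm

lemma P_pos (hq0 : 0 ≤ q) (hq1 : q < 1) (m : ℕ) : 0 < P q m := by
  rw [P_eq_exp hq0 hq1]; exact Real.exp_pos _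

lemma P_le_one (hq0 : 0 ≤ q) (hq1 : q < 1) (m : ℕ) : P q m ≤ 1 := by
  rw [P_eq_exp hq0 hq1]
  rw [show (1:ℝ) = Real.exp 0 by simp]
  apply Real.exp_le_exp.2
  apply tsum_nonpos
  intro k
  have h1 := one_sub_pos' (e := m+1+k) hq0 hq1 (by omega)
  have h2 : 0 ≤ q ^ (m+1+k) := pow_nonneg hq0 _
  exact Real.log_nonpos (by linarith) (by linarith)

lemma S_succ (hq0 : 0 ≤ q) (hq1 : q < 1) (m : ℕ) :
    S q m = Real.log (1 - q ^ (m + 1)) + S q (m + 1) := by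
  have h := Summable.tsum_eq_zero_add (summable_shift hq0 hq1 m)
  rw [S, h]
  have h2 : ∑' (b : ℕ), Real.log (1 - q ^ (m + 1 + (b + 1))) = S q (m + 1) :=
    tsum_congr fun k => by rw [show m + 1 + (k + 1) = m + 1 + 1 + k from by omega]
  rw [h2]

lemma P_succ (hq0 : 0 ≤ q) (hq1 : q < 1) (m : ℕ) :
    P q m = (1 - q ^ (m + 1)) * P q (m + 1) := by
  rw [P_eq_exp hq0 hq1, P_eq_exp hq0 hq1, S_succ hq0 hq1 m, Real.exp_add,
    Real.exp_log (one_sub_pos' (e := m+1) hq0 hq1 (by omega))]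

/-- finite q-Pochhammer -/
noncomputable def D (q : ℝ) (a : ℕ) : ℝ := ∏ j ∈ Finset.range a, (1 - q ^ (j + 1))

lemma D_succ (a : ℕ) : D q (a + 1) = D q a * (1 - q ^ (a + 1)) := by
  simp [D, Finset.prod_range_succ]

lemma P_zero_eq (hq0 : 0 ≤ q) (hq1 : q < 1) (a : ℕ) : P q 0 = D q a * P q a := by
  induction a with
  | zero => simp [D]
  | succ n ih =>
      rw [ih, P_succ hq0 hq1 n, D_succ]
      ring

lemma D_pos (hq0 : 0 ≤ q) (hq1 : q < 1) (a : ℕ) : 0 < D q a :=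
  Finset.prod_pos fun j _ => one_sub_pos' (e := j+1) hq0 hq1 (by omega)

lemma P0_le_D (hq0 : 0 ≤ q) (hq1 : q < 1) (a : ℕ) : P q 0 ≤ D q a := by
  have h := P_zero_eq hq0 hq1 a
  nlinarith [P_le_one hq0 hq1 a, P_pos hq0 hq1 a, D_pos hq0 hq1 a]

/-- Euler summand -/
noncomputable def c (q : ℝ) (n a : ℕ) : ℝ := q ^ (a * (a + 1) / 2 + n * a) / D q a

lemma c_nonneg (hq0 : 0 ≤ q) (hq1 : q < 1) (n a : ℕ) : 0 ≤ c q n a :=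
  div_nonneg (pow_nonneg hq0 _) (D_pos hq0 hq1 a).le

lemma c_le (hq0 : 0 ≤ q) (hq1 : q < 1) (n a e : ℕ) (he : e ≤ a * (a + 1) / 2 + n * a) :
    c q n a ≤ q ^ e / P q 0 := by
  rw [c]
  have h1 : q ^ (a * (a+1) / 2 + n * a) ≤ q ^ e :=
    pow_le_pow_of_le_one hq0 hq1.le he
  have h2 := P0_le_D hq0 hq1 a
  have h3 := P_pos hq0 hq1 0
  exact div_le_div₀ (pow_nonneg hq0 _) h1 h3 h2

lemma tri_succ (a : ℕ) : (a + 1) * (a + 2) / 2 = a * (a + 1) / 2 + (a + 1) := by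
  have h : (a+1)*(a+2) = a*(a+1) + (a+1)*2 := by ring
  rw [h, Nat.add_mul_div_right _ _ (by norm_num)]

lemma self_le_tri (a : ℕ) : a ≤ a * (a + 1) / 2 := by
  cases a with
  | zero => omega
  | succ b => rw [tri_succ]; omega

lemma summable_c (hq0 : 0 ≤ q) (hq1 : q < 1) (n : ℕ) : Summable (c q n) := by
  have hsum : Summable fun a : ℕ => q ^ a / P q 0 :=
    (summable_geometric_of_lt_one hq0 hq1).div_const _
  refine Summable.of_nonneg_of_le (c_nonneg hq0 hq1 n) (fun a => ?_) hsum
  exact c_le hq0 hq1 n a a ((self_le_tri a).trans (Nat.le_add_right _ _))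

noncomputable def G (q : ℝ) (n : ℕ) : ℝ := ∑' a, c q n a

lemma c_zero (n : ℕ) : c q n 0 = 1 := by simp [c, D]

lemma c_rec (hq0 : 0 < q) (hq1 : q < 1) (n a : ℕ) :
    c q n (a + 1) = c q (n + 1) (a + 1) + q ^ (n + 1) * c q (n + 1) a := by
  have hDa := (D_pos hq0.le hq1 a).ne'
  have hqa : (1 : ℝ) - q ^ (a+1) ≠ 0 := (one_sub_pos' (e := a+1) hq0.le hq1 (by omega)).ne'
  have hE : (a+1) * (a+2) / 2 + n * (a+1) = a * (a+1) / 2 + (n+1) * a + (n + 1) := by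
    rw [tri_succ]
    generalize a * (a+1) / 2 = t
    ring
  have hE2 : (a+1) * (a+2) / 2 + (n+1) * (a+1)
      = a * (a+1) / 2 + (n+1) * a + (n+1) + (a+1) := by
    rw [tri_succ]
    generalize a * (a+1) / 2 = t
    ring
  rw [c, c, c, hE, hE2, D_succ]
  field_simp
  ring

lemma hasSum_c (hq0 : 0 < q) (hq1 : q < 1) (n : ℕ) :
    HasSum (c q n) ((1 + q ^ (n + 1)) * G q (n + 1)) := by
  have hs : HasSum (c q (n+1)) (G q (n+1)) := (summable_c hq0.le hq1 (n+1)).hasSum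
  set d : ℕ → ℝ := fun a => if a = 0 then 0 else c q (n+1) (a - 1) with hd
  have hd1 : HasSum d (G q (n + 1)) := by
    have h2 : HasSum (fun a => d (a + 1)) (G q (n+1)) := by
      have he : (fun a => d (a + 1)) = c q (n+1) := by
        funext a; simp [hd]
      rw [he]; exact hs
    have h3 := (hasSum_nat_add_iff (f := d) 1).1 h2
    simpa [hd] using h3
  have hadd := hs.add (hd1.mul_left (q ^ (n+1)))
  have hpt : (fun a => c q (n+1) a + q ^ (n+1) * d a) = c q n := by
    funext a
    cases a with
    | zero => simp [hd, c_zero]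
    | succ b => simp only [hd, Nat.succ_ne_zero, if_false, Nat.add_sub_cancel]
                rw [c_rec hq0 hq1 n b]
  have hv : G q (n+1) + q ^ (n+1) * G q (n+1) = (1 + q ^ (n+1)) * G q (n+1) := by ring
  rw [← hv]
  exact hpt ▸ hadd

lemma G_rec (hq0 : 0 < q) (hq1 : q < 1) (n : ℕ) :
    G q n = (1 + q ^ (n + 1)) * G q (n + 1) :=
  (hasSum_c hq0 hq1 n).tsum_eq

lemma G_prod (hq0 : 0 < q) (hq1 : q < 1) (N : ℕ) :
    G q 0 = (∏ k ∈ Finset.range N, (1 + q ^ (k + 1))) * G q N := by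
  induction N with
  | zero => simp
  | succ n ih =>
      rw [ih, G_rec hq0 hq1 n, Finset.prod_range_succ]
      ring

lemma G_ge_one (hq0 : 0 < q) (hq1 : q < 1) (n : ℕ) : 1 ≤ G q n := by
  have h := Summable.tsum_eq_zero_add (summable_c hq0.le hq1 n)
  rw [G, h, c_zero]
  have : 0 ≤ ∑' a, c q n (a + 1) :=
    tsum_nonneg fun a => c_nonneg hq0.le hq1 n _
  linarith

noncomputable def K (q : ℝ) : ℝ := ∑' a : ℕ, q ^ (a + 1) / P q 0

lemma G_le (hq0 : 0 < q) (hq1 : q < 1) (n : ℕ) : G q n ≤ 1 + q ^ n * K q := by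
  have h := Summable.tsum_eq_zero_add (summable_c hq0.le hq1 n)
  rw [G, h, c_zero]
  have hsum2 : Summable fun a : ℕ => q ^ (n + (a+1)) / P q 0 := by
    have : Summable fun a : ℕ => q ^ a / P q 0 :=
      (summable_geometric_of_lt_one hq0.le hq1).div_const _
    exact ((summable_nat_add_iff (n+1)).2 this).congr fun a => by
      congr 1; congr 1; omega
  have hle : ∑' a, c q n (a+1) ≤ ∑' a : ℕ, q ^ (n + (a+1)) / P q 0 := by
    apply Summable.tsum_le_tsum _ ((summable_c hq0.le hq1 n).comp_injective (add_left_injective 1)) hsum2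
    · intro a
      apply c_le hq0.le hq1 n (a+1)
      have h1 : a + 1 ≤ (a+1) * (a+2) / 2 := self_le_tri (a+1)
      calc n + (a+1) ≤ n * (a+1) + (a+1) := by
            have : n ≤ n * (a+1) := Nat.le_mul_of_pos_right n (by omega)
            omega
        _ ≤ (a+1) * (a+2) / 2 + n * (a+1) := by omega
  have heq : ∑' a : ℕ, q ^ (n + (a+1)) / P q 0 = q ^ n * K q := by
    rw [K, ← tsum_mul_left]
    apply tsum_congr
    intro a
    rw [pow_add]
    ring
  rw [heq] at hle
  linarith

lemma G_tendsto (hq0 : 0 < q) (hq1 : q < 1) : Tendsto (G q) atTop (𝓝 1) := by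
  have hub : Tendsto (fun n : ℕ => 1 + q ^ n * K q) atTop (𝓝 1) := by
    have := (tendsto_pow_atTop_nhds_zero_of_lt_one hq0.le hq1).mul_const (K q)
    simpa using (tendsto_const_nhds (x := (1:ℝ))).add this
  exact tendsto_of_tendsto_of_tendsto_of_le_of_le tendsto_const_nhds hub
    (G_ge_one hq0 hq1) (G_le hq0 hq1)

/-- the product `∏ (1 + q^{k+1})` -/
noncomputable def M (q : ℝ) : ℝ := ∏' k : ℕ, (1 + q ^ (k + 1))

lemma M_eq_exp (hq0 : 0 < q) (hq1 : q < 1) :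
    M q = Real.exp (∑' k : ℕ, Real.log (1 + q ^ (k + 1))) := by
  exact (Real.rexp_tsum_eq_tprod (f := fun k => 1 + q ^ (k + 1))
    (fun k => by positivity)
    (summable_log_one_add hq0.le hq1)).symm

lemma M_hasProd (hq0 : 0 < q) (hq1 : q < 1) :
    HasProd (fun k : ℕ => (1 + q ^ (k + 1))) (M q) :=
  by rw [M_eq_exp hq0 hq1]; exact Real.hasProd_of_hasSum_log (f := fun k => 1 + q ^ (k + 1))
        (fun k => by positivity)
        (summable_log_one_add hq0.le hq1).hasSum

lemma G_zero_eq_M (hq0 : 0 < q) (hq1 : q < 1) : G q 0 = M q := by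
  have h1 : Tendsto (fun N => (∏ k ∈ Finset.range N, (1 + q ^ (k + 1))) * G q N)
      atTop (𝓝 (M q * 1)) :=
    ((M_hasProd hq0 hq1).tendsto_prod_nat).mul (G_tendsto hq0 hq1)
  have h2 : (fun N => (∏ k ∈ Finset.range N, (1 + q ^ (k + 1))) * G q N)
      = fun _ => G q 0 := by
    funext N; exact (G_prod hq0 hq1 N).symm
  rw [h2] at h1
  simpa using tendsto_nhds_unique tendsto_const_nhds h1

/-- the product `∏ (1 - q^{2(k+1)})` -/
noncomputable def C (q : ℝ) : ℝ := ∏' k : ℕ, (1 - q ^ (2 * (k + 1)))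

lemma summable_log_sq (hq0 : 0 < q) (hq1 : q < 1) :
    Summable fun k : ℕ => Real.log (1 - q ^ (2 * (k + 1))) := by
  have h : Summable fun k : ℕ => Real.log (1 - (q ^ 2) ^ (k + 1)) :=
    summable_log_one_sub (by positivity) (by nlinarith)
  exact h.congr fun k => by rw [← pow_mul]

lemma C_eq_exp (hq0 : 0 < q) (hq1 : q < 1) :
    C q = Real.exp (∑' k : ℕ, Real.log (1 - q ^ (2 * (k + 1)))) := by
  exact (Real.rexp_tsum_eq_tprod (f := fun k => 1 - q ^ (2 * (k + 1)))
    (fun k => one_sub_pos' hq0.le hq1 (by omega))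
    (summable_log_sq hq0 hq1)).symm

lemma P0_mul_M (hq0 : 0 < q) (hq1 : q < 1) : P q 0 * M q = C q := by
  rw [P_eq_exp hq0.le hq1, M_eq_exp hq0 hq1, C_eq_exp hq0 hq1, ← Real.exp_add]
  congr 1
  rw [S, ← Summable.tsum_add (summable_shift hq0.le hq1 0) (summable_log_one_add hq0.le hq1)]
  apply tsum_congr
  intro k
  have h1 : (0:ℕ) + 1 + k = k + 1 := by omega
  rw [h1, ← Real.log_mul (one_sub_pos' (e := k+1) hq0.le hq1 (by omega)).ne'
    (by positivity)]
  rw [show 2 * (k+1) = (k+1) + (k+1) from by omega, pow_add]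
  ring

lemma C_pos (hq0 : 0 < q) (hq1 : q < 1) : 0 < C q := by
  rw [C_eq_exp hq0 hq1]; exact Real.exp_pos _

/-- the key identity -/
lemma key (hq0 : 0 < q) (hq1 : q < 1) :
    HasSum (fun a : ℕ => q ^ (a * (a + 1) / 2) * P q a) (C q) := by
  have h0 : HasSum (c q 0) (M q) := by
    have := (summable_c hq0.le hq1 0).hasSum
    rwa [show ∑' a, c q 0 a = M q from G_zero_eq_M hq0 hq1] at this
  have h1 := h0.mul_left (P q 0)
  rw [P0_mul_M hq0 hq1] at h1
  refine h1.congr_fun fun a => ?_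
  rw [c, P_zero_eq hq0.le hq1 a]
  have hD := (D_pos hq0.le hq1 a).ne'
  field_simp
  ring_nf

end Stmt13

open scoped BigOperators

/-- For real `p > 1`:
`∑_{a=0}^{∞} ∏_{i=a+1}^{∞}(1-p^{-i}) / (p^{a(a+1)/2} ∏_{i=1}^{∞}(1-p^{-2i})) = 1`. -/
theorem stmt13 (p : ℝ) (hp : 1 < p) :
    HasSum
      (fun a : ℕ =>
        (∏' k : ℕ, (1 - 1 / p ^ (a + 1 + k))) /
          (p ^ (a * (a + 1) / 2) * ∏' k : ℕ, (1 - 1 / p ^ (2 * (k + 1))))) 1 := by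
  set q := 1 / p with hq
  have hp0 : 0 < p := lt_trans one_pos hp
  have hq0 : 0 < q := by positivity
  have hq1 : q < 1 := by rw [hq]; rw [div_lt_one hp0]; exact hp
  have hpow : ∀ e : ℕ, 1 / p ^ e = q ^ e := fun e => by
    rw [hq, div_pow, one_pow]
  have hCeq : (∏' k : ℕ, (1 - 1 / p ^ (2 * (k + 1)))) = Stmt13.C q := by
    rw [Stmt13.C]; exact tprod_congr fun k => by rw [hpow]
  have hPeq : ∀ a : ℕ, (∏' k : ℕ, (1 - 1 / p ^ (a + 1 + k))) = Stmt13.P q a := fun a => by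
    rw [Stmt13.P]; exact tprod_congr fun k => by rw [hpow]
  have hkey := (Stmt13.key hq0 hq1).div_const (Stmt13.C q)
  rw [div_self (Stmt13.C_pos hq0 hq1).ne'] at hkey
  refine hkey.congr_fun fun a => ?_
  rw [hCeq, hPeq]
  rw [show (q : ℝ) ^ (a * (a+1)/2) = 1 / p ^ (a * (a+1)/2) from (hpow _).symm]
  have hpp : (p : ℝ) ^ (a * (a+1)/2) ≠ 0 := by positivity
  have hCc := (Stmt13.C_pos hq0 hq1).ne'
  field_simp
end

section
/- Let p > 1 be a real number and define P(a) = ∏_{i odd}(1 − p^{-i}) / ( p^{a(a+1)/2} · ∏_{i=1}^{a}(1 − p^{-i}) ) for natural numbers a. Then for every positive integer r: ∏_{i=1}^{r}(1 − p^{-i}) · ∑_{s=0}^{r} P(s) / ( (∏_{i=1}^{r−s}(1 − p^{-i})) · ∏_{i odd}(1 − p^{-i}) ) = ∏_{k=1}^{r}(1 + p^{-k}). Moreover, this system of equations for r = 1, 2, 3, …, together with the value P(0) = ∏_{i odd}(1 − p^{-i}), determines the values P(1), P(2), P(3), … uniquely. -/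
open scoped BigOperators

/-- `P(a) = ∏_{i odd}(1-p^{-i}) / (p^{a(a+1)/2} ∏_{i=1}^{a}(1-p^{-i}))`. -/
noncomputable def Pa (p : ℝ) (a : ℕ) : ℝ :=
  (∏' k : ℕ, (1 - 1 / p ^ (2 * k + 1))) /
    (p ^ (a * (a + 1) / 2) * ∏ i ∈ Finset.Icc 1 a, (1 - 1 / p ^ i))

namespace Stmt14Aux

noncomputable def aa (q : ℝ) (n : ℕ) : ℝ := ∏ i ∈ Finset.Icc 1 n, (1 - q ^ i)

lemma aa_zero (q : ℝ) : aa q 0 = 1 := by simp [aa]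

lemma aa_succ (q : ℝ) (n : ℕ) : aa q (n + 1) = aa q n * (1 - q ^ (n + 1)) := by
  rw [aa, aa, Finset.prod_Icc_succ_top (by omega)]

lemma factor_pos {q : ℝ} (hq0 : 0 < q) (hq1 : q < 1) {i : ℕ} (hi : 1 ≤ i) :
    0 < 1 - q ^ i := by
  have : q ^ i < 1 := pow_lt_one₀ hq0.le hq1 (by omega)
  linarith

lemma aa_pos {q : ℝ} (hq0 : 0 < q) (hq1 : q < 1) (n : ℕ) : 0 < aa q n := by
  apply Finset.prod_pos
  intro i hi
  exact factor_pos hq0 hq1 (Finset.mem_Icc.mp hi).1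

noncomputable def bb (q : ℝ) (r s : ℕ) : ℝ :=
  if s ≤ r then aa q r / (aa q s * aa q (r - s)) else 0

lemma estep (s : ℕ) : (s + 1) * (s + 2) / 2 = s * (s + 1) / 2 + (s + 1) := by
  have h : (s + 1) * (s + 2) = s * (s + 1) + (s + 1) * 2 := by ring
  rw [h, Nat.add_mul_div_right _ _ (by norm_num)]

lemma pascal {q : ℝ} (hq0 : 0 < q) (hq1 : q < 1) (r s : ℕ) :
    bb q (r + 1) (s + 1) = bb q r (s + 1) + q ^ (r - s) * bb q r s := by
  rcases lt_trichotomy s r with h | rfl | h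
  · obtain ⟨m, rfl⟩ : ∃ m, r = s + 1 + m := ⟨r - s - 1, by omega⟩
    rw [bb, bb, bb, if_pos (by omega), if_pos (by omega), if_pos (by omega)]
    have e1 : s + 1 + m + 1 - (s + 1) = m + 1 := by omega
    have e2 : s + 1 + m - (s + 1) = m := by omega
    have e3 : s + 1 + m - s = m + 1 := by omega
    rw [e1, e2, e3]
    have hA := (aa_pos hq0 hq1 s).ne'
    have hM := (aa_pos hq0 hq1 m).ne'
    have hs1 := (factor_pos hq0 hq1 (i := s + 1) (by omega)).ne'
    have hm1 := (factor_pos hq0 hq1 (i := m + 1) (by omega)).ne'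
    rw [show s + 1 + m + 1 = (s + 1 + m) + 1 from rfl, aa_succ q (s + 1 + m),
      aa_succ q s, aa_succ q m]
    field_simp
    ring
  · rw [bb, bb, bb, if_pos le_rfl, if_neg (by omega), if_pos le_rfl]
    have h1 := (aa_pos hq0 hq1 (s + 1)).ne'
    have h2 := (aa_pos hq0 hq1 s).ne'
    simp [aa_zero, Nat.sub_self, div_self, h1, h2]
  · rw [bb, bb, bb, if_neg (by omega), if_neg (by omega), if_neg (by omega)]
    simp

lemma gauss {q : ℝ} (hq0 : 0 < q) (hq1 : q < 1) (r : ℕ) :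
    ∑ s ∈ Finset.range (r + 1), q ^ (s * (s + 1) / 2) * bb q r s
      = ∏ k ∈ Finset.Icc 1 r, (1 + q ^ k) := by
  induction r with
  | zero => simp [bb, aa_zero]
  | succ r ih =>
    have hb0 : bb q r (r + 1) = 0 := by rw [bb, if_neg (by omega)]
    have hbb0 : bb q (r + 1) 0 = 1 := by
      rw [bb, if_pos (by omega)]
      simp [aa_zero, div_self (aa_pos hq0 hq1 (r + 1)).ne']
    have hbr0 : bb q r 0 = 1 := by
      rw [bb, if_pos (by omega)]
      simp [aa_zero, div_self (aa_pos hq0 hq1 r).ne']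
    have key : ∀ s ∈ Finset.range (r + 1),
        q ^ ((s + 1) * (s + 1 + 1) / 2) * bb q (r + 1) (s + 1)
          = q ^ ((s + 1) * (s + 1 + 1) / 2) * bb q r (s + 1)
            + q ^ (r + 1) * (q ^ (s * (s + 1) / 2) * bb q r s) := by
      intro s hs
      have hsr : s ≤ r := by have := Finset.mem_range.mp hs; omega
      rw [pascal hq0 hq1, mul_add]
      congr 1
      rw [← mul_assoc, ← mul_assoc, ← pow_add, ← pow_add]
      congr 1
      rw [show s + 1 + 1 = s + 2 from rfl, estep s]
      congr 1
      generalize s * (s + 1) / 2 = e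
      omega
    have h1 : (∑ s ∈ Finset.range (r + 1), q ^ ((s + 1) * (s + 1 + 1) / 2) * bb q r (s + 1))
        = (∑ s ∈ Finset.range (r + 1), q ^ (s * (s + 1) / 2) * bb q r s)
          - q ^ (0 * (0 + 1) / 2) * bb q r 0 := by
      have h2 := Finset.sum_range_succ' (fun s => q ^ (s * (s + 1) / 2) * bb q r s) (r + 1)
      rw [Finset.sum_range_succ] at h2
      simp only [hb0, mul_zero, add_zero] at h2
      linarith
    rw [Finset.prod_Icc_succ_top (by omega), ← ih]
    rw [Finset.sum_range_succ' (fun s => q ^ (s * (s + 1) / 2) * bb q (r + 1) s) (r + 1)]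
    rw [Finset.sum_congr rfl key, Finset.sum_add_distrib, ← Finset.mul_sum, h1, hbb0, hbr0]
    simp only [Nat.zero_mul, Nat.zero_div, pow_zero]
    ring

end Stmt14Aux

open Stmt14Aux in
/-- For real `p > 1`, the function `P` satisfies, for every positive
integer `r`, the recursion
`∏_{i=1}^{r}(1-p^{-i}) ∑_{s=0}^{r} P(s)/((∏_{i=1}^{r-s}(1-p^{-i})) ∏_{i odd}(1-p^{-i}))
  = ∏_{k=1}^{r}(1+p^{-k})`;
moreover this system of equations for `r = 1, 2, 3, …` together with the value
`P(0) = ∏_{i odd}(1-p^{-i})` determines `P(1), P(2), …` uniquely. -/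
theorem stmt14 (p : ℝ) (hp : 1 < p) :
    (∀ r : ℕ, 1 ≤ r →
      (∏ i ∈ Finset.Icc 1 r, (1 - 1 / p ^ i)) *
        ∑ s ∈ Finset.range (r + 1),
          Pa p s /
            ((∏ i ∈ Finset.Icc 1 (r - s), (1 - 1 / p ^ i)) *
              ∏' k : ℕ, (1 - 1 / p ^ (2 * k + 1)))
        = ∏ k ∈ Finset.Icc 1 r, (1 + 1 / p ^ k)) ∧
    (∀ Q : ℕ → ℝ,
      Q 0 = (∏' k : ℕ, (1 - 1 / p ^ (2 * k + 1))) →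
      (∀ r : ℕ, 1 ≤ r →
        (∏ i ∈ Finset.Icc 1 r, (1 - 1 / p ^ i)) *
          ∑ s ∈ Finset.range (r + 1),
            Q s /
              ((∏ i ∈ Finset.Icc 1 (r - s), (1 - 1 / p ^ i)) *
                ∏' k : ℕ, (1 - 1 / p ^ (2 * k + 1)))
          = ∏ k ∈ Finset.Icc 1 r, (1 + 1 / p ^ k)) →
      ∀ a : ℕ, Q a = Pa p a) := by
  have hp0 : (0 : ℝ) < p := lt_trans one_pos hp
  obtain ⟨q, hq⟩ : ∃ q : ℝ, q = 1 / p := ⟨_, rfl⟩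
  have hq0 : 0 < q := by rw [hq]; positivity
  have hq1 : q < 1 := by rw [hq]; exact (div_lt_one hp0).mpr hp
  have hconv : ∀ i : ℕ, (1 : ℝ) - 1 / p ^ i = 1 - q ^ i := by
    intro i; rw [hq, div_pow, one_pow]
  have hprod : ∀ n : ℕ, ∏ i ∈ Finset.Icc 1 n, (1 - 1 / p ^ i) = aa q n := by
    intro n; exact Finset.prod_congr rfl fun i _ => hconv i
  -- positivity of the infinite product
  have hT : 0 < ∏' k : ℕ, (1 - 1 / p ^ (2 * k + 1)) := by
    have hfpos : ∀ k : ℕ, 0 < (1 : ℝ) - 1 / p ^ (2 * k + 1) := by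
      intro k; rw [hconv]; exact factor_pos hq0 hq1 (by omega)
    have hsum : Summable fun k : ℕ => Real.log (1 - 1 / p ^ (2 * k + 1)) := by
      have hs' : Summable (fun k : ℕ => -Real.log (1 - 1 / p ^ (2 * k + 1))) := by
        apply Summable.of_nonneg_of_le
          (f := fun k : ℕ => (1 - q)⁻¹ * q * (q ^ 2) ^ k)
        · intro k
          have h1 : (1 : ℝ) - 1 / p ^ (2 * k + 1) ≤ 1 := by
            have : 0 < 1 / p ^ (2 * k + 1) := by positivity
            linarith
          simp only [neg_nonneg]
          exact Real.log_nonpos (hfpos k).le h1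
        · intro k
          have hx1 : q ^ (2 * k + 1) < 1 := pow_lt_one₀ hq0.le hq1 (by omega)
          have hxk : q ^ (2 * k + 1) ≤ q := by
            calc q ^ (2 * k + 1) ≤ q ^ 1 :=
                  pow_le_pow_of_le_one hq0.le hq1.le (by omega)
              _ = q := pow_one q
          rw [hconv, ← Real.log_inv]
          have h2 : Real.log (1 - q ^ (2 * k + 1))⁻¹ ≤ (1 - q ^ (2 * k + 1))⁻¹ - 1 :=
            Real.log_le_sub_one_of_pos (inv_pos.mpr (by linarith))
          have hne : (1 : ℝ) - q ^ (2 * k + 1) ≠ 0 := by linarith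
          have h3 : (1 - q ^ (2 * k + 1))⁻¹ - 1
              = q ^ (2 * k + 1) / (1 - q ^ (2 * k + 1)) := by
            rw [eq_div_iff hne, sub_mul, inv_mul_cancel₀ hne]
            ring
          have h4 : q ^ (2 * k + 1) / (1 - q ^ (2 * k + 1))
              ≤ q ^ (2 * k + 1) / (1 - q) := by
            apply div_le_div_of_nonneg_left (by positivity) (by linarith) (by linarith)
          have h5 : q ^ (2 * k + 1) / (1 - q) = (1 - q)⁻¹ * q * (q ^ 2) ^ k := by
            rw [← pow_mul, div_eq_mul_inv]
            ring
          rw [← h5]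
          linarith [h3 ▸ h2]
        · exact Summable.mul_left _
            (summable_geometric_of_lt_one (by positivity) (by nlinarith))
      have := hs'.neg
      simpa using this
    have hEq := Real.rexp_tsum_eq_tprod
        (f := fun k => 1 - 1 / p ^ (2 * k + 1))
        (fun k => hfpos k) hsum
    rw [← hEq]
    exact Real.exp_pos _
  obtain ⟨T, hTdef⟩ : ∃ T : ℝ, T = ∏' k : ℕ, (1 - 1 / p ^ (2 * k + 1)) := ⟨_, rfl⟩
  rw [← hTdef] at hT
  rw [← hTdef]
  have hPa : ∀ s : ℕ, Pa p s = T / (p ^ (s * (s + 1) / 2) * aa q s) := by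
    intro s
    rw [Pa, hprod s, hTdef]
  have main1 : ∀ r : ℕ, 1 ≤ r →
      (∏ i ∈ Finset.Icc 1 r, (1 - 1 / p ^ i)) *
        ∑ s ∈ Finset.range (r + 1),
          Pa p s / ((∏ i ∈ Finset.Icc 1 (r - s), (1 - 1 / p ^ i)) * T)
        = ∏ k ∈ Finset.Icc 1 r, (1 + 1 / p ^ k) := by
    intro r _
    rw [hprod r, Finset.mul_sum]
    have hsumc : ∀ s ∈ Finset.range (r + 1),
        aa q r * (Pa p s / ((∏ i ∈ Finset.Icc 1 (r - s), (1 - 1 / p ^ i)) * T))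
          = q ^ (s * (s + 1) / 2) * bb q r s := by
      intro s hs
      have hsr : s ≤ r := by have := Finset.mem_range.mp hs; omega
      rw [hprod (r - s), hPa s, bb, if_pos hsr]
      have hqe : q ^ (s * (s + 1) / 2) = 1 / p ^ (s * (s + 1) / 2) := by
        rw [hq, div_pow, one_pow]
      have hT' : T ≠ 0 := hT.ne'
      have h1 := (aa_pos hq0 hq1 s).ne'
      have h2 := (aa_pos hq0 hq1 (r - s)).ne'
      have h3 := (aa_pos hq0 hq1 r).ne'
      have hpe : p ^ (s * (s + 1) / 2) ≠ 0 := pow_ne_zero _ hp0.ne'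
      rw [hqe]
      field_simp
    rw [Finset.sum_congr rfl hsumc, gauss hq0 hq1]
    exact Finset.prod_congr rfl fun k _ => by rw [hq, div_pow, one_pow]
  refine ⟨main1, ?_⟩
  intro Q hQ0 hQrec a
  induction a using Nat.strong_induction_on with
  | _ a ih =>
    match a with
    | 0 =>
      rw [hQ0, hPa 0]
      simp [aa_zero]
    | (r + 1) =>
      have E1 := main1 (r + 1) (by omega)
      have E2 := hQrec (r + 1) (by omega)
      have hA : (∏ i ∈ Finset.Icc 1 (r + 1), (1 - 1 / p ^ i)) ≠ 0 := by
        rw [hprod]; exact (aa_pos hq0 hq1 (r + 1)).ne'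
      have hsum : ∑ s ∈ Finset.range (r + 1 + 1),
            Q s / ((∏ i ∈ Finset.Icc 1 (r + 1 - s), (1 - 1 / p ^ i)) * T)
          = ∑ s ∈ Finset.range (r + 1 + 1),
            Pa p s / ((∏ i ∈ Finset.Icc 1 (r + 1 - s), (1 - 1 / p ^ i)) * T) :=
        mul_left_cancel₀ hA (by rw [E1, E2])
      rw [Finset.sum_range_succ, Finset.sum_range_succ
          (fun s => Pa p s / ((∏ i ∈ Finset.Icc 1 (r + 1 - s), (1 - 1 / p ^ i)) * T))] at hsum
      have heq : ∀ s ∈ Finset.range (r + 1),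
          Q s / ((∏ i ∈ Finset.Icc 1 (r + 1 - s), (1 - 1 / p ^ i)) * T)
            = Pa p s / ((∏ i ∈ Finset.Icc 1 (r + 1 - s), (1 - 1 / p ^ i)) * T) := by
        intro s hs
        rw [ih s (by have := Finset.mem_range.mp hs; omega)]
      rw [Finset.sum_congr rfl heq] at hsum
      have hlast := add_left_cancel hsum
      rw [Nat.sub_self, show Finset.Icc 1 0 = (∅ : Finset ℕ) from rfl,
        Finset.prod_empty, one_mul] at hlast
      have hT' : T ≠ 0 := hT.ne'
      field_simp [hT'] at hlast
      exact hlast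
end
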